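/- arXiv:2310.06771 — 11 statements merged into one kernel-verified Lean document; each statement's English description precedes it below -/
import Mathlib

section
/- For all real numbers a, b with 0 < |b| < a and every integer l, the integral over ω ∈ [−π, π] of cos(lω)/(a² + b² − 2ab·cos ω) with respect to Lebesgue measure equals (2π/(a² − b²))·(b/a)^{|l|}. -/
/-!
Writing `r = b / a`, the integrand is `(a² - b²)⁻¹` times the Poisson kernel of the unit disc at
`r` times `cos (|l| ω)`. On the unit circle `cos (n ω) = Re (z ^ n)`, so the Poisson integral
formula for the entire function `z ^ n` evaluates the integral to `2π r ^ n`.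
-/

open MeasureTheory Real

theorem poissonKernel_zero_ofReal_circleMap_one (r θ : ℝ) :
    poissonKernel 0 r (circleMap 0 1 θ) = (1 - r ^ 2) / (1 - 2 * r * cos θ + r ^ 2) := by
  have hnorm : ‖circleMap 0 1 θ - r‖ ^ 2 = 1 - 2 * r * cos θ + r ^ 2 := by
    rw [← Complex.normSq_eq_norm_sq, Complex.normSq_apply]
    simp only [circleMap_zero, Complex.ofReal_one, one_mul, Complex.sub_re, Complex.sub_im,
      Complex.exp_ofReal_mul_I_re, Complex.exp_ofReal_mul_I_im, Complex.ofReal_re,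
      Complex.ofReal_im, sub_zero]
    linear_combination sin_sq_add_cos_sq θ
  simp [poissonKernel, hnorm]

theorem integral_poissonKernel_mul_cos {r : ℝ} (hr : |r| < 1) (n : ℕ) :
    ∫ θ in -π..π, (1 - r ^ 2) / (1 - 2 * r * cos θ + r ^ 2) * cos (n * θ) = 2 * π * r ^ n := by
  have hw : (r : ℂ) ∈ Metric.ball 0 1 := by simpa using hr
  have hpoisson := (differentiable_pow n).diffContOnCl.circleAverage_poissonKernel_smul hw
  have hintegrable : CircleIntegrable (poissonKernel 0 r • fun z : ℂ => z ^ n) 0 1 := by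
    refine ContinuousOn.circleIntegrable zero_le_one ?_
    rw [poissonKernel_eq_re_herglotzRieszKernel]
    have hkernel := continuousOn_herglotzRieszKernel_sphere hw
    rw [abs_one] at hkernel
    exact (Complex.continuous_re.comp_continuousOn hkernel).smul (continuous_pow n).continuousOn
  have hre := congrArg Complex.re hpoisson
  rw [← Complex.reCLM_apply, ← Complex.reCLM.circleAverage_comp_comm hintegrable,
    circleAverage_eq_integral_add (-π), intervalIntegral.integral_comp_add_right
      (fun θ => (Complex.reCLM ∘ (poissonKernel 0 r • fun z : ℂ => z ^ n)) (circleMap 0 1 θ))] at hre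
  simp only [Function.comp_apply, Pi.smul_apply', Complex.reCLM_apply, Complex.real_smul,
    Complex.re_ofReal_mul, circleMap_zero_pow, one_pow, circleMap_zero_re, one_mul,
    poissonKernel_zero_ofReal_circleMap_one, smul_eq_mul] at hre
  rw [← Complex.ofReal_pow, Complex.ofReal_re] at hre
  rwa [zero_add, show 2 * π + -π = π by ring, inv_mul_eq_iff_eq_mul₀ (by positivity)] at hre

theorem cos_intCast_mul_eq_cos_natAbs_mul (l : ℤ) (x : ℝ) : cos (l * x) = cos (l.natAbs * x) := by
  rw [Nat.cast_natAbs, Int.cast_abs]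
  rcases abs_choice (l : ℝ) with h | h <;> simp [h]

theorem cos_integral_quadratic_form_general (a b : ℝ) (hba : |b| < a) (l : ℤ) :
    (∫ ω in Set.Icc (-π) π,
        Real.cos (l * ω) / (a ^ 2 + b ^ 2 - 2 * a * b * Real.cos ω))
      = (2 * π / (a ^ 2 - b ^ 2)) * (b / a) ^ l.natAbs := by
  have ha : 0 < a := (abs_nonneg b).trans_lt hba
  have hr : |b / a| < 1 := by rwa [abs_div, abs_of_pos ha, div_lt_one ha]
  have hab : 0 < a ^ 2 - b ^ 2 := by nlinarith [sq_abs b, abs_nonneg b]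
  have hrescale : ∀ ω, cos (l * ω) / (a ^ 2 + b ^ 2 - 2 * a * b * cos ω) =
      (a ^ 2 - b ^ 2)⁻¹ * ((1 - (b / a) ^ 2) / (1 - 2 * (b / a) * cos ω + (b / a) ^ 2) *
        cos (l.natAbs * ω)) := by
    intro ω
    rw [cos_intCast_mul_eq_cos_natAbs_mul]
    field_simp
    ring
  rw [integral_Icc_eq_integral_Ioc, ← intervalIntegral.integral_of_le (by linarith [pi_pos]),
    funext hrescale, intervalIntegral.integral_const_mul, integral_poissonKernel_mul_cos hr]
  ring

theorem cos_integral_quadratic_form (a b : ℝ) (hb : 0 < |b|) (hba : |b| < a) (l : ℤ) :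
    (∫ ω in Set.Icc (-π) π,
        Real.cos (l * ω) / (a ^ 2 + b ^ 2 - 2 * a * b * Real.cos ω))
      = (2 * π / (a ^ 2 - b ^ 2)) * (b / a) ^ l.natAbs :=
  cos_integral_quadratic_form_general a b hba l
end

section
/- Let (β_t)_{t=0}^∞ be a real sequence with Σ_{t=0}^∞ |β_t| < ∞ and let 0 < a < 1. Define B(ω) = Σ_{t=0}^∞ β_t e^{iωt} (the series converges absolutely for every ω) and S = Σ_{t=0}^∞ Σ_{τ=0}^∞ β_t β_τ (1 − a)^{|t−τ|} (an absolutely convergent double series). Then (1/2)·S ≤ (a/(2π)) · ∫_{−π}^{π} |B(ω)|² / |1 − a − e^{iω}|² dω ≤ S. -/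
/-! With `b = 1 - a`, `|1 - a - e^{iω}|² = 1 + b² - 2b cos ω`, and the Poisson kernel expansion
`(1 - b²) / (1 + b² - 2b cos ω) = ∑_{k ∈ ℤ} b^{|k|} cos kω` together with
`|B(ω)|² = ∑_{t,τ} β_t β_τ cos((t - τ)ω)` and orthogonality of the cosines on `[-π, π]` give the
exact identity `(a / 2π) ∫ |B|² / |1 - a - e^{iω}|² = a S / (1 - b²) = S / (2 - a)`.
The integral is nonnegative, hence so is `S`, and `1 < 2 - a < 2` yields both bounds. -/

open MeasureTheory Real

theorem integral_cos_int_mul_Icc (m : ℤ) :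
    ∫ ω in Set.Icc (-π) π, cos (m * ω) = if m = 0 then 2 * π else 0 := by
  rw [integral_Icc_eq_integral_Ioc, ← intervalIntegral.integral_of_le (by linarith [pi_pos])]
  split_ifs with hm
  · simp [hm]; ring
  · have hm' : (m : ℝ) ≠ 0 := Int.cast_ne_zero.mpr hm
    simp [intervalIntegral.integral_comp_mul_left (fun x => cos x) hm', sin_int_mul_pi]

theorem integral_cos_int_mul_mul_cos_int_mul_Icc (n k : ℤ) :
    ∫ ω in Set.Icc (-π) π, cos (n * ω) * cos (k * ω) =
      π * ((if k = n then 1 else 0) + if k = -n then 1 else 0) := by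
  have hprod (ω : ℝ) : cos (n * ω) * cos (k * ω) =
      cos (((n - k : ℤ) : ℝ) * ω) / 2 + cos (((n + k : ℤ) : ℝ) * ω) / 2 := by
    push_cast
    rw [sub_mul, add_mul, cos_sub, cos_add]; ring
  have hint (m : ℤ) : IntegrableOn (fun ω => cos (m * ω) / 2) (Set.Icc (-π) π) :=
    (continuous_cos.comp (continuous_const.mul continuous_id)).div_const 2 |>.integrableOn_Icc
  simp only [hprod]
  rw [integral_add (hint _) (hint _), integral_div, integral_div,
    integral_cos_int_mul_Icc, integral_cos_int_mul_Icc]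
  split_ifs <;> first | omega | ring

theorem integral_tsum_of_norm_le {ι α E : Type*} [Countable ι] [MeasurableSpace α]
    {μ : Measure α} [IsFiniteMeasure μ] [NormedAddCommGroup E] [NormedSpace ℝ E]
    {F : ι → α → E} {C : ι → ℝ} (hF : ∀ i, AEStronglyMeasurable (F i) μ) (hC : Summable C)
    (hFC : ∀ i x, ‖F i x‖ ≤ C i) :
    ∫ x, ∑' i, F i x ∂μ = ∑' i, ∫ x, F i x ∂μ := by
  have hint (i : ι) : Integrable (F i) μ := .of_bound (hF i) (C i) (.of_forall (hFC i))
  refine (integral_tsum_of_summable_integral_norm hint ?_).symm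
  refine (hC.mul_right (μ.real Set.univ)).of_nonneg_of_le
    (fun i => integral_nonneg fun x => norm_nonneg _) fun i => ?_
  refine (le_abs_self _).trans ?_
  simpa using norm_integral_le_of_norm_le_const (μ := μ) (f := fun x => ‖F i x‖)
    (.of_forall fun x => by simpa using hFC i x)

theorem hasSum_pow_natAbs_mul_cos {b : ℝ} (hb : |b| < 1) (ω : ℝ) :
    HasSum (fun k : ℤ => b ^ k.natAbs * cos (k * ω))
      ((1 - b ^ 2) / (1 + b ^ 2 - 2 * b * cos ω)) := by
  set z : ℂ := b * Complex.exp (ω * Complex.I)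
  set w : ℂ := b * Complex.exp (-ω * Complex.I)
  have hz : ‖z‖ < 1 := by simpa [z, Complex.norm_exp_ofReal_mul_I] using hb
  have hw : ‖w‖ < 1 := by
    simpa [w, ← Complex.ofReal_neg, Complex.norm_exp_ofReal_mul_I] using hb
  have hsum : HasSum (fun k : ℤ => (b : ℂ) ^ k.natAbs * Complex.exp (k * ω * Complex.I))
      ((1 - z)⁻¹ + w * (1 - w)⁻¹) := by
    refine HasSum.of_nat_of_neg_add_one ?_ ?_
    · refine (hasSum_geometric_of_norm_lt_one hz).congr_fun fun n => ?_
      simp [z, mul_pow, ← Complex.exp_nat_mul, mul_assoc]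
    · refine ((hasSum_geometric_of_norm_lt_one hw).mul_left w).congr_fun fun n => ?_
      rw [← pow_succ', mul_pow, ← Complex.exp_nat_mul]
      congr 2
      push_cast; ring
  have hzw : z * w = b ^ 2 := by
    rw [mul_mul_mul_comm, ← Complex.exp_add]; simp [sq]
  have hz_add_w : z + w = 2 * b * Complex.cos ω := by
    linear_combination -(b : ℂ) * Complex.two_cos (ω : ℂ)
  clear_value z w
  have hval : (1 - z)⁻¹ + w * (1 - w)⁻¹ =
      (((1 - b ^ 2) / (1 + b ^ 2 - 2 * b * cos ω) : ℝ) : ℂ) := by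
    have h1 : (1 : ℂ) - z ≠ 0 := fun h => by simp [← sub_eq_zero.mp h] at hz
    have h2 : (1 : ℂ) - w ≠ 0 := fun h => by simp [← sub_eq_zero.mp h] at hw
    have hden : (1 - z) * (1 - w) = ((1 + b ^ 2 - 2 * b * cos ω : ℝ) : ℂ) := by
      push_cast; linear_combination hzw - hz_add_w
    rw [Complex.ofReal_div, ← hden]
    field_simp
    push_cast
    linear_combination -hzw
  have hre := Complex.hasSum_re (hval ▸ hsum)
  rw [Complex.ofReal_re] at hre
  convert hre using 2 with k
  rw [← Complex.ofReal_pow, ← Complex.ofReal_intCast, ← Complex.ofReal_mul, Complex.re_ofReal_mul,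
    Complex.exp_ofReal_mul_I_re]

theorem one_sub_abs_sq_le_one_add_sq_sub_mul_cos (b ω : ℝ) :
    (1 - |b|) ^ 2 ≤ 1 + b ^ 2 - 2 * b * cos ω := by
  have : b * cos ω ≤ |b| :=
    calc b * cos ω ≤ |b| * |cos ω| := abs_mul b (cos ω) ▸ le_abs_self _
      _ ≤ |b| := mul_le_of_le_one_right (abs_nonneg b) (abs_cos_le_one ω)
  nlinarith [sq_abs b]

theorem integral_cos_int_mul_div_Icc {b : ℝ} (hb : |b| < 1) (n : ℤ) :
    ∫ ω in Set.Icc (-π) π, cos (n * ω) / (1 + b ^ 2 - 2 * b * cos ω) =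
      2 * π * b ^ n.natAbs / (1 - b ^ 2) := by
  have hb2 : 0 < 1 - b ^ 2 := by nlinarith [sq_abs b, abs_nonneg b]
  set F : ℤ → ℝ → ℝ := fun k ω => b ^ k.natAbs / (1 - b ^ 2) * (cos (n * ω) * cos (k * ω))
  have hexpand (ω : ℝ) : cos (n * ω) / (1 + b ^ 2 - 2 * b * cos ω) = ∑' k, F k ω := by
    have hD : 0 < 1 + b ^ 2 - 2 * b * cos ω :=
      (pow_pos (by linarith) 2).trans_le (one_sub_abs_sq_le_one_add_sq_sub_mul_cos b ω)
    rw [tsum_congr fun k => show F k ω = cos (n * ω) / (1 - b ^ 2) * (b ^ k.natAbs * cos (k * ω))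
      by ring, tsum_mul_left, (hasSum_pow_natAbs_mul_cos hb ω).tsum_eq]
    field_simp
  have hsummable : Summable fun k : ℤ => |b| ^ k.natAbs / (1 - b ^ 2) := by
    have := (hasSum_pow_natAbs_mul_cos (b := |b|) (by rwa [abs_abs]) 0).summable
    simpa using this.div_const (1 - b ^ 2)
  have hbound (k : ℤ) (ω : ℝ) : ‖F k ω‖ ≤ |b| ^ k.natAbs / (1 - b ^ 2) := by
    rw [Real.norm_eq_abs, abs_mul, abs_div, abs_pow, abs_of_pos hb2]
    refine mul_le_of_le_one_right (by positivity) ?_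
    rw [abs_mul]
    exact mul_le_one₀ (abs_cos_le_one _) (abs_nonneg _) (abs_cos_le_one _)
  rw [integral_congr_ae (.of_forall hexpand), integral_tsum_of_norm_le
    (fun k => (by fun_prop : Continuous (F k)).aestronglyMeasurable) hsummable hbound]
  have hterm (k : ℤ) : ∫ ω in Set.Icc (-π) π, F k ω =
      (if k = n then π * b ^ n.natAbs / (1 - b ^ 2) else 0) +
        if k = -n then π * b ^ n.natAbs / (1 - b ^ 2) else 0 := by
    simp only [F, integral_const_mul, integral_cos_int_mul_mul_cos_int_mul_Icc]
    split_ifs <;> subst_vars <;> (try rw [Int.natAbs_neg]) <;> ring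
  rw [tsum_congr hterm, Summable.tsum_add (hasSum_ite_eq n _).summable
    (hasSum_ite_eq (-n) _).summable, tsum_ite_eq, tsum_ite_eq]
  ring

theorem hasSum_re_mul_conj {ι : Type*} {g : ι → ℂ} (hg : Summable fun t => ‖g t‖) :
    HasSum (fun p : ι × ι => (g p.1 * starRingEnd ℂ (g p.2)).re) (‖∑' t, g t‖ ^ 2) := by
  set h : ι → ℂ := fun t => starRingEnd ℂ (g t)
  have hg' : Summable fun t => ‖h t‖ := by simpa [h] using hg
  have hconj : HasSum h (starRingEnd ℂ (∑' t, g t)) :=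
    Complex.hasSum_conj'.mpr hg.of_norm.hasSum
  have hprod := Complex.hasSum_re <|
    HasSum.mul hg.of_norm.hasSum hconj (summable_mul_of_summable_norm hg hg')
  rwa [Complex.mul_conj, Complex.ofReal_re, Complex.normSq_eq_norm_sq] at hprod

theorem norm_ofReal_mul_exp_I_mul (x ω : ℝ) (t : ℕ) :
    ‖(x : ℂ) * Complex.exp (Complex.I * ω * t)‖ = |x| := by
  rw [norm_mul, Complex.norm_real, Real.norm_eq_abs, mul_comm Complex.I, ← Complex.ofReal_natCast,
    mul_right_comm, ← Complex.ofReal_mul, Complex.norm_exp_ofReal_mul_I, mul_one]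

theorem sq_norm_tsum_mul_exp (β : ℕ → ℝ) (hβ : Summable fun t => |β t|) (ω : ℝ) :
    ‖∑' t, (β t : ℂ) * Complex.exp (Complex.I * ω * t)‖ ^ 2 =
      ∑' p : ℕ × ℕ, β p.1 * β p.2 * cos ((((p.1 : ℤ) - p.2 : ℤ) : ℝ) * ω) := by
  have hnorm : Summable fun t => ‖(β t : ℂ) * Complex.exp (Complex.I * ω * t)‖ := by
    simpa only [norm_ofReal_mul_exp_I_mul] using hβ
  rw [← (hasSum_re_mul_conj hnorm).tsum_eq]
  refine tsum_congr fun p => ?_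
  rw [map_mul, Complex.conj_ofReal, ← Complex.exp_conj, mul_mul_mul_comm, ← Complex.exp_add,
    ← Complex.ofReal_mul, Complex.re_ofReal_mul, ← Complex.exp_ofReal_mul_I_re]
  congr 3
  simp [Complex.conj_ofReal]
  ring

theorem sq_norm_ofReal_sub_exp_I_mul (b ω : ℝ) :
    ‖(b : ℂ) - Complex.exp (Complex.I * ω)‖ ^ 2 = 1 + b ^ 2 - 2 * b * cos ω := by
  rw [Complex.sq_norm, Complex.normSq_apply, mul_comm Complex.I]
  simp only [Complex.sub_re, Complex.sub_im, Complex.ofReal_re, Complex.ofReal_im,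
    Complex.exp_ofReal_mul_I_re, Complex.exp_ofReal_mul_I_im]
  linear_combination sin_sq_add_cos_sq ω

theorem summable_abs_mul_mul_pow_natAbs {β : ℕ → ℝ} (hβ : Summable fun t => |β t|) {b : ℝ}
    (hb : |b| ≤ 1) :
    Summable fun p : ℕ × ℕ => |β p.1 * β p.2 * b ^ ((p.1 : ℤ) - p.2).natAbs| := by
  refine (hβ.mul_of_nonneg hβ (fun _ => abs_nonneg _) fun _ => abs_nonneg _).of_nonneg_of_le
    (fun _ => abs_nonneg _) fun p => ?_
  rw [abs_mul, abs_mul, abs_pow]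
  exact mul_le_of_le_one_right (by positivity) (pow_le_one₀ (abs_nonneg b) hb)

theorem integral_sq_norm_tsum_mul_exp_div (β : ℕ → ℝ) (hβ : Summable fun t => |β t|) {b : ℝ}
    (hb : |b| < 1) :
    ∫ ω in Set.Icc (-π) π, ‖∑' t, (β t : ℂ) * Complex.exp (Complex.I * ω * t)‖ ^ 2 /
        ‖(b : ℂ) - Complex.exp (Complex.I * ω)‖ ^ 2 =
      2 * π / (1 - b ^ 2) * ∑' p : ℕ × ℕ, β p.1 * β p.2 * b ^ ((p.1 : ℤ) - p.2).natAbs := by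
  have hb1 : 0 < 1 - |b| := by linarith
  set F : ℕ × ℕ → ℝ → ℝ := fun p ω =>
    β p.1 * β p.2 * (cos ((((p.1 : ℤ) - p.2 : ℤ) : ℝ) * ω) / (1 + b ^ 2 - 2 * b * cos ω))
  have hexpand (ω : ℝ) : ‖∑' t, (β t : ℂ) * Complex.exp (Complex.I * ω * t)‖ ^ 2 /
      ‖(b : ℂ) - Complex.exp (Complex.I * ω)‖ ^ 2 = ∑' p, F p ω := by
    simp only [F, sq_norm_tsum_mul_exp β hβ, sq_norm_ofReal_sub_exp_I_mul, ← tsum_div_const,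
      mul_div_assoc]
  have hbound (p : ℕ × ℕ) (ω : ℝ) : ‖F p ω‖ ≤ |β p.1| * |β p.2| / (1 - |b|) ^ 2 := by
    have hD := one_sub_abs_sq_le_one_add_sq_sub_mul_cos b ω
    rw [Real.norm_eq_abs, abs_mul, abs_mul, abs_div, abs_of_pos ((pow_pos hb1 2).trans_le hD),
      ← mul_one_div _ ((1 - |b|) ^ 2)]
    gcongr
    exact abs_cos_le_one _
  have hsummable : Summable fun p : ℕ × ℕ => |β p.1| * |β p.2| / (1 - |b|) ^ 2 :=
    (hβ.mul_of_nonneg hβ (fun _ => abs_nonneg _) fun _ => abs_nonneg _).div_const _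
  have hD (ω : ℝ) : 1 + b ^ 2 - 2 * b * cos ω ≠ 0 :=
    ((pow_pos hb1 2).trans_le (one_sub_abs_sq_le_one_add_sq_sub_mul_cos b ω)).ne'
  rw [integral_congr_ae (.of_forall hexpand), integral_tsum_of_norm_le
    (fun p => (by fun_prop (disch := exact hD) : Continuous (F p)).aestronglyMeasurable)
    hsummable hbound, ← tsum_mul_left]
  refine tsum_congr fun p => ?_
  rw [integral_const_mul, integral_cos_int_mul_div_Icc hb]
  ring

theorem integral_main_bounds (β : ℕ → ℝ) (hβ : Summable fun t => |β t|)
    (a : ℝ) (ha0 : 0 < a) (ha1 : a < 1) :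
    (∀ ω : ℝ, Summable fun t : ℕ =>
        ‖(β t : ℂ) * Complex.exp (Complex.I * (ω : ℂ) * (t : ℂ))‖) ∧
    Summable (fun p : ℕ × ℕ =>
        |β p.1 * β p.2 * (1 - a) ^ ((p.1 : ℤ) - (p.2 : ℤ)).natAbs|) ∧
    (1 / 2) * (∑' t : ℕ, ∑' τ : ℕ, β t * β τ * (1 - a) ^ ((t : ℤ) - (τ : ℤ)).natAbs)
        ≤ (a / (2 * π)) *
          (∫ ω in Set.Icc (-π) π,
            ‖∑' t : ℕ, (β t : ℂ) * Complex.exp (Complex.I * (ω : ℂ) * (t : ℂ))‖ ^ 2 /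
              ‖(1 : ℂ) - (a : ℂ) - Complex.exp (Complex.I * (ω : ℂ))‖ ^ 2) ∧
    (a / (2 * π)) *
          (∫ ω in Set.Icc (-π) π,
            ‖∑' t : ℕ, (β t : ℂ) * Complex.exp (Complex.I * (ω : ℂ) * (t : ℂ))‖ ^ 2 /
              ‖(1 : ℂ) - (a : ℂ) - Complex.exp (Complex.I * (ω : ℂ))‖ ^ 2)
        ≤ ∑' t : ℕ, ∑' τ : ℕ, β t * β τ * (1 - a) ^ ((t : ℤ) - (τ : ℤ)).natAbs := by
  have hb : |1 - a| < 1 := abs_lt.mpr ⟨by linarith, by linarith⟩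
  have hsummable := summable_abs_mul_mul_pow_natAbs hβ hb.le
  have hiter : ∑' t : ℕ, ∑' τ : ℕ, β t * β τ * (1 - a) ^ ((t : ℤ) - (τ : ℤ)).natAbs =
      ∑' p : ℕ × ℕ, β p.1 * β p.2 * (1 - a) ^ ((p.1 : ℤ) - p.2).natAbs :=
    hsummable.of_abs.tsum_prod.symm
  have hintegral := integral_sq_norm_tsum_mul_exp_div β hβ hb
  push_cast at hintegral
  set S := ∑' p : ℕ × ℕ, β p.1 * β p.2 * (1 - a) ^ ((p.1 : ℤ) - p.2).natAbs
  have hS : 0 ≤ S := by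
    have hpos : 0 < 2 * π / (1 - (1 - a) ^ 2) := div_pos (by positivity) (by nlinarith)
    exact (mul_nonneg_iff_of_pos_left hpos).mp (hintegral ▸ setIntegral_nonneg measurableSet_Icc
      fun ω _ => by positivity)
  have hvalue : a / (2 * π) * (2 * π / (1 - (1 - a) ^ 2) * S) = S / (2 - a) := by
    rw [show 1 - (1 - a) ^ 2 = a * (2 - a) by ring]
    field_simp [show 2 - a ≠ 0 by linarith]
  refine ⟨fun ω => by simpa only [norm_ofReal_mul_exp_I_mul] using hβ, hsummable, ?_, ?_⟩ <;>
    rw [hintegral, hiter, hvalue]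
  · rw [le_div_iff₀ (by linarith)]
    nlinarith
  · exact div_le_self hS (by linarith)
end

section
/- Let (β_t)_{t=0}^∞ be a real sequence with Σ_{t=0}^∞ β_t² < ∞ and let r ∈ (0, 1). Then the doubly-indexed family (β_t β_τ r^{|t−τ|})_{t,τ ∈ ℕ} is summable, and its sum Σ_{t=0}^∞ Σ_{τ=0}^∞ β_t β_τ r^{|t−τ|} is nonnegative. -/
/-!
The kernel `r ^ |t - τ|` is the covariance of a stationary AR(1) process: if `e` is orthonormal
and `X (t + 1) = r X t + √(1 - r²) e (t + 1)`, then `⟪X t, X τ⟫ = r ^ |t - τ|`. Every finite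
truncation of the double series is therefore `‖∑ β t • X t‖² ≥ 0`, and the full sum is a limit
of such truncations. Absolute summability follows from `|β t β τ| ≤ β t² + β τ²` and the
summability of `r ^ |d|` over `d ∈ ℤ`.
-/

open Finset

section Covariance

variable {E : Type*} [NormedAddCommGroup E] [InnerProductSpace ℝ E]

theorem sum_sum_mul_inner_nonneg {ι : Type*} (s : Finset ι) (β : ι → ℝ) (v : ι → E) :
    0 ≤ ∑ t ∈ s, ∑ τ ∈ s, β t * β τ * inner ℝ (v t) (v τ) := by
  have hgram : ∑ t ∈ s, ∑ τ ∈ s, β t * β τ * inner ℝ (v t) (v τ) =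
      inner ℝ (∑ t ∈ s, β t • v t) (∑ τ ∈ s, β τ • v τ) := by
    rw [sum_inner]
    refine sum_congr rfl fun t _ => ?_
    rw [real_inner_smul_left, inner_sum, mul_sum]
    refine sum_congr rfl fun τ _ => ?_
    rw [real_inner_smul_right, mul_assoc]
  exact hgram ▸ real_inner_self_nonneg

noncomputable def ar1 (e : ℕ → E) (r : ℝ) : ℕ → E
  | 0 => e 0
  | t + 1 => r • ar1 e r t + √(1 - r ^ 2) • e (t + 1)

variable {e : ℕ → E} (he : Orthonormal ℝ e) {r : ℝ}
include he

theorem inner_ar1_of_lt {s m : ℕ} (h : s < m) : inner ℝ (ar1 e r s) (e m) = 0 := by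
  induction s with
  | zero => exact he.2 h.ne
  | succ s ih =>
    simp only [ar1, inner_add_left, real_inner_smul_left, ih (by omega), he.2 h.ne]
    ring

theorem inner_ar1_self (hr : |r| ≤ 1) (t : ℕ) : inner ℝ (ar1 e r t) (ar1 e r t) = 1 := by
  have hsq : √(1 - r ^ 2) ^ 2 = 1 - r ^ 2 :=
    Real.sq_sqrt (by nlinarith [abs_nonneg r, sq_abs r])
  induction t with
  | zero => rw [ar1, real_inner_self_eq_norm_sq, he.1 0, one_pow]
  | succ t ih =>
    simp only [ar1, inner_add_left, inner_add_right, real_inner_smul_left, real_inner_smul_right,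
      ih, real_inner_comm (ar1 e r t), inner_ar1_of_lt he t.lt_succ_self,
      real_inner_self_eq_norm_sq (e (t + 1)), he.1, one_pow]
    linear_combination hsq

theorem inner_ar1_add (hr : |r| ≤ 1) (t k : ℕ) :
    inner ℝ (ar1 e r t) (ar1 e r (t + k)) = r ^ k := by
  induction k with
  | zero => simpa using inner_ar1_self he hr t
  | succ k ih =>
    rw [← add_assoc, ar1, inner_add_right, real_inner_smul_right, real_inner_smul_right, ih,
      inner_ar1_of_lt he (by omega), pow_succ]
    ring

theorem inner_ar1_eq_pow_natAbs_sub (hr : |r| ≤ 1) (t τ : ℕ) :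
    inner ℝ (ar1 e r t) (ar1 e r τ) = r ^ ((t : ℤ) - τ).natAbs := by
  rcases le_total t τ with h | h
  · obtain ⟨k, rfl⟩ := Nat.exists_eq_add_of_le h
    rw [inner_ar1_add he hr]
    congr; omega
  · obtain ⟨k, rfl⟩ := Nat.exists_eq_add_of_le h
    rw [real_inner_comm, inner_ar1_add he hr]
    congr; omega

end Covariance

theorem summable_pow_natAbs {r : ℝ} (hr : |r| < 1) : Summable fun d : ℤ => r ^ d.natAbs :=
  .of_nat_of_neg (by simpa using summable_geometric_of_abs_lt_one hr)
    (by simpa using summable_geometric_of_abs_lt_one hr)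

theorem summable_mul_pow_natAbs_sub {a : ℕ → ℝ} (ha : Summable a) {r : ℝ} (hr : |r| < 1) :
    Summable fun p : ℕ × ℕ => a p.1 * r ^ ((p.1 : ℤ) - p.2).natAbs := by
  have hprod : Summable fun q : ℕ × ℤ => a q.1 * r ^ q.2.natAbs :=
    summable_mul_of_summable_norm (f := a) (g := fun d : ℤ => r ^ d.natAbs)
      (by simpa only [Real.norm_eq_abs] using ha.abs)
      (by simpa only [Real.norm_eq_abs] using (summable_pow_natAbs hr).abs)
  have hinj : Function.Injective fun p : ℕ × ℕ => (p.1, (p.1 : ℤ) - p.2) := by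
    rintro ⟨t, τ⟩ ⟨t', τ'⟩ h
    simp only [Prod.mk.injEq] at h
    ext <;> omega
  exact hprod.comp_injective hinj

theorem summable_mul_mul_pow_natAbs_sub {β : ℕ → ℝ} (hβ : Summable fun t => β t ^ 2) {r : ℝ}
    (hr : |r| < 1) :
    Summable fun p : ℕ × ℕ => β p.1 * β p.2 * r ^ ((p.1 : ℤ) - p.2).natAbs := by
  have hleft := summable_mul_pow_natAbs_sub hβ (r := |r|) (by rwa [abs_abs])
  have hright : Summable fun p : ℕ × ℕ => β p.2 ^ 2 * |r| ^ ((p.1 : ℤ) - p.2).natAbs :=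
    hleft.prod_symm.congr fun p => by
      rw [Prod.fst_swap, Prod.snd_swap, ← Int.natAbs_neg, neg_sub]
  refine .of_norm_bounded (hleft.add hright) fun ⟨t, τ⟩ => ?_
  rw [norm_mul, norm_mul, norm_pow, Real.norm_eq_abs, Real.norm_eq_abs, Real.norm_eq_abs,
    ← add_mul]
  gcongr
  nlinarith [two_mul_le_add_sq |β t| |β τ|, sq_abs (β t), sq_abs (β τ),
    mul_nonneg (abs_nonneg (β t)) (abs_nonneg (β τ))]

theorem tsum_nonneg_of_sum_range_prod_nonneg {f : ℕ × ℕ → ℝ} (hf : Summable f)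
    (h : ∀ n, 0 ≤ ∑ p ∈ range n ×ˢ range n, f p) : 0 ≤ ∑' p, f p := by
  have hsquares : Filter.Tendsto (fun n => range n ×ˢ range n) .atTop .atTop := by
    refine Filter.tendsto_atTop_finset_of_monotone (fun m n hmn => ?_) fun p => ?_
    · exact product_subset_product (range_subset_range.2 hmn) (range_subset_range.2 hmn)
    · exact ⟨max p.1 p.2 + 1, by simp only [mem_product, mem_range]; omega⟩
  exact ge_of_tendsto' (hf.hasSum.comp hsquares) h

theorem summable_and_nonneg_double_series (β : ℕ → ℝ) (hβ : Summable fun t => β t ^ 2)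
    (r : ℝ) (hr0 : 0 < r) (hr1 : r < 1) :
    Summable (fun p : ℕ × ℕ => β p.1 * β p.2 * r ^ ((p.1 : ℤ) - (p.2 : ℤ)).natAbs) ∧
    0 ≤ ∑' t : ℕ, ∑' τ : ℕ, β t * β τ * r ^ ((t : ℤ) - (τ : ℤ)).natAbs := by
  have hr : |r| < 1 := abs_lt.2 ⟨by linarith, hr1⟩
  have hsum := summable_mul_mul_pow_natAbs_sub hβ hr
  refine ⟨hsum, ?_⟩
  rw [← hsum.tsum_prod' hsum.prod_factor]
  let b : HilbertBasis ℕ ℝ (lp (fun _ : ℕ => ℝ) 2) := default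
  refine tsum_nonneg_of_sum_range_prod_nonneg hsum fun n => ?_
  simpa only [sum_product, inner_ar1_eq_pow_natAbs_sub b.orthonormal hr.le] using
    sum_sum_mul_inner_nonneg (range n) β (ar1 b r)
end

section
/- For every real sequence (β_t)_{t=0}^∞ with Σ_{t=0}^∞ β_t² < ∞ and every real constant c with 0 ≤ c < 1, one has Σ_{t=0}^∞ Σ_{τ=0}^∞ β_t β_τ c^{|t−τ|} ≤ ((1 + c)/(1 − c)) · Σ_{t=0}^∞ β_t². -/
/-!
Schur's test: for a symmetric kernel `k ≥ 0` whose row sums are at most `K`, the bound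
`|β i β j| ≤ (β i ^ 2 + β j ^ 2) / 2` together with the symmetry of `k` gives
`∑ i j, β i β j k i j ≤ ∑ i j, β i ^ 2 k i j ≤ K ∑ i, β i ^ 2`.
The kernel `c ^ |t - τ|` qualifies with `K = (1 + c) / (1 - c)`, since each of its rows
is a subseries of the two-sided geometric series `∑ n : ℤ, c ^ |n| = (1 + c) / (1 - c)`.
-/

theorem hasSum_pow_natAbs {𝕜 : Type*} [NormedField 𝕜] {c : 𝕜} (hc : ‖c‖ < 1) :
    HasSum (fun n : ℤ => c ^ n.natAbs) ((1 + c) / (1 - c)) := by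
  have hgeom := hasSum_geometric_of_norm_lt_one hc
  have hneg : HasSum (fun n : ℕ => c ^ (-((n : ℤ) + 1)).natAbs) (c * (1 - c)⁻¹) := by
    have hnat (n : ℕ) : (-((n : ℤ) + 1)).natAbs = n + 1 := by omega
    simpa only [hnat, pow_succ'] using hgeom.mul_left c
  rw [add_div, one_div, div_eq_mul_inv]
  exact hgeom.of_nat_of_neg_add_one hneg

theorem summable_pow_natAbs_sub {𝕜 : Type*} [NormedField 𝕜] [CompleteSpace 𝕜] {c : 𝕜}
    (hc : ‖c‖ < 1) (t : ℤ) : Summable fun τ : ℕ => c ^ (t - τ).natAbs :=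
  (hasSum_pow_natAbs hc).summable.comp_injective fun a b h => by simpa using h

theorem tsum_pow_natAbs_sub_le {c : ℝ} (hc0 : 0 ≤ c) (hc1 : c < 1) (t : ℤ) :
    ∑' τ : ℕ, c ^ (t - τ).natAbs ≤ (1 + c) / (1 - c) := by
  have hc : ‖c‖ < 1 := by rwa [Real.norm_of_nonneg hc0]
  rw [← (hasSum_pow_natAbs hc).tsum_eq]
  exact tsum_comp_le_tsum_of_inj (hasSum_pow_natAbs hc).summable (fun _ => pow_nonneg hc0 _)
    fun a b h => by simpa using h

section SchurTest

variable {ι : Type*} {k : ι → ι → ℝ} {K : ℝ} {β : ι → ℝ}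

theorem summable_sq_mul_kernel (hk0 : ∀ i j, 0 ≤ k i j) (hk : ∀ i, Summable (k i))
    (hK : ∀ i, ∑' j, k i j ≤ K) (hβ : Summable fun i => β i ^ 2) :
    Summable fun p : ι × ι => β p.1 ^ 2 * k p.1 p.2 := by
  have hnonneg : 0 ≤ fun p : ι × ι => β p.1 ^ 2 * k p.1 p.2 := fun p =>
    mul_nonneg (sq_nonneg _) (hk0 p.1 p.2)
  refine (summable_prod_of_nonneg hnonneg).mpr ⟨fun i => (hk i).mul_left (β i ^ 2), ?_⟩
  refine (hβ.mul_right K).of_nonneg_of_le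
    (fun i => tsum_nonneg fun j => mul_nonneg (sq_nonneg (β i)) (hk0 i j)) fun i => ?_
  show ∑' j, β i ^ 2 * k i j ≤ β i ^ 2 * K
  rw [tsum_mul_left]
  exact mul_le_mul_of_nonneg_left (hK i) (sq_nonneg _)

theorem tsum_sq_mul_kernel_le (hk0 : ∀ i j, 0 ≤ k i j) (hk : ∀ i, Summable (k i))
    (hK : ∀ i, ∑' j, k i j ≤ K) (hβ : Summable fun i => β i ^ 2) :
    ∑' p : ι × ι, β p.1 ^ 2 * k p.1 p.2 ≤ K * ∑' i, β i ^ 2 := by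
  have hg := summable_sq_mul_kernel hk0 hk hK hβ
  have hrow (i : ι) : ∑' j, β i ^ 2 * k i j = β i ^ 2 * ∑' j, k i j := tsum_mul_left
  calc ∑' p : ι × ι, β p.1 ^ 2 * k p.1 p.2 = ∑' i, β i ^ 2 * ∑' j, k i j := by
        rw [hg.tsum_prod]; exact tsum_congr hrow
    _ ≤ ∑' i, β i ^ 2 * K := by
        refine Summable.tsum_le_tsum (fun i => mul_le_mul_of_nonneg_left (hK i) (sq_nonneg _))
          ?_ (hβ.mul_right K)
        simpa only [hrow] using hg.prod
    _ = K * ∑' i, β i ^ 2 := by rw [tsum_mul_right, mul_comm]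

theorem abs_mul_mul_kernel_le (hk0 : ∀ i j, 0 ≤ k i j) (hk_symm : ∀ i j, k i j = k j i)
    (i j : ι) :
    |β i * β j * k i j| ≤ (β i ^ 2 * k i j + β j ^ 2 * k j i) / 2 := by
  have hamgm : |β i * β j| ≤ (β i ^ 2 + β j ^ 2) / 2 := by
    have := two_mul_le_add_sq |β i| |β j|
    rw [sq_abs, sq_abs] at this
    rw [abs_mul]
    linarith
  calc |β i * β j * k i j| = |β i * β j| * k i j := by rw [abs_mul, abs_of_nonneg (hk0 i j)]
    _ ≤ (β i ^ 2 + β j ^ 2) / 2 * k i j := mul_le_mul_of_nonneg_right hamgm (hk0 i j)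
    _ = (β i ^ 2 * k i j + β j ^ 2 * k j i) / 2 := by rw [← hk_symm]; ring

theorem tsum_tsum_mul_kernel_le (hk0 : ∀ i j, 0 ≤ k i j) (hk_symm : ∀ i j, k i j = k j i)
    (hk : ∀ i, Summable (k i)) (hK : ∀ i, ∑' j, k i j ≤ K) (hβ : Summable fun i => β i ^ 2) :
    ∑' i, ∑' j, β i * β j * k i j ≤ K * ∑' i, β i ^ 2 := by
  set g : ι × ι → ℝ := fun p => β p.1 ^ 2 * k p.1 p.2
  have hg : Summable g := summable_sq_mul_kernel hk0 hk hK hβ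
  have hbound (p : ι × ι) : ‖β p.1 * β p.2 * k p.1 p.2‖ ≤ (g p + g p.swap) / 2 :=
    abs_mul_mul_kernel_le hk0 hk_symm p.1 p.2
  have hmaj : Summable fun p : ι × ι => (g p + g p.swap) / 2 :=
    (hg.add hg.prod_symm).div_const 2
  have hf : Summable fun p : ι × ι => β p.1 * β p.2 * k p.1 p.2 := hmaj.of_norm_bounded hbound
  have hswap : ∑' p : ι × ι, g p.swap = ∑' p, g p := (Equiv.prodComm ι ι).tsum_eq g
  calc ∑' i, ∑' j, β i * β j * k i j = ∑' p : ι × ι, β p.1 * β p.2 * k p.1 p.2 :=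
        hf.tsum_prod.symm
    _ ≤ ∑' p, (g p + g p.swap) / 2 :=
        hf.tsum_le_tsum (fun p => (le_abs_self _).trans (hbound p)) hmaj
    _ = ∑' p, g p := by rw [tsum_div_const, hg.tsum_add hg.prod_symm, hswap, add_self_div_two]
    _ ≤ K * ∑' i, β i ^ 2 := tsum_sq_mul_kernel_le hk0 hk hK hβ

end SchurTest

theorem double_series_le (β : ℕ → ℝ) (hβ : Summable fun t => β t ^ 2)
    (c : ℝ) (hc0 : 0 ≤ c) (hc1 : c < 1) :
    (∑' t : ℕ, ∑' τ : ℕ, β t * β τ * c ^ ((t : ℤ) - (τ : ℤ)).natAbs)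
      ≤ ((1 + c) / (1 - c)) * ∑' t : ℕ, β t ^ 2 := by
  have hc : ‖c‖ < 1 := by rwa [Real.norm_of_nonneg hc0]
  refine tsum_tsum_mul_kernel_le (fun _ _ => pow_nonneg hc0 _) (fun t τ => ?_)
    (fun t => summable_pow_natAbs_sub hc t) (fun t => tsum_pow_natAbs_sub_le hc0 hc1 t) hβ
  rw [← Int.natAbs_neg, neg_sub]
end

section
/- For every real number a with 0 < a < 1, ∫_{−π}^{π} dω / |1 − a − e^{iω}| = (4/(2 − a)) · K(√(1 − a)/(1 − a/2)), where K(k) = ∫_0^{π/2} dθ / √(1 − k² sin² θ) is the complete elliptic integral of the first kind. -/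
open MeasureTheory Real

/-!
Writing `b = 1 - a`, one has `|b - e^{iω}|² = (1 + b)² - 4b cos²(ω/2) = (2 - a)² (1 - k² cos²(ω/2))`
with `k = √(1 - a) / (1 - a/2)`. Substituting `θ = ω/2`, using that the integrand is even and
then `θ ↦ π/2 - θ` turns the integral over `[-π, π]` into four times `K(k)`.
-/

/-- The complete elliptic integral of the first kind,
`K(k) = ∫ θ in [0, π/2], dθ / √(1 - k² sin² θ)`. -/
noncomputable def ellipticK (k : ℝ) : ℝ :=
  ∫ θ in Set.Icc 0 (π / 2), 1 / Real.sqrt (1 - k ^ 2 * Real.sin θ ^ 2)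

namespace intervalIntegral

variable {E : Type*} [NormedAddCommGroup E] [NormedSpace ℝ E]

theorem integral_neg_self_eq_two_smul_of_even {f : ℝ → E} (hf : f.Even)
    {c : ℝ} (hint : IntervalIntegrable f volume 0 c) :
    ∫ x in -c..c, f x = (2 : ℝ) • ∫ x in 0..c, f x := by
  have hf_comp_neg : (fun x ↦ f (-x)) = f := funext hf
  have hint_neg : IntervalIntegrable f volume (-c) 0 := by
    simpa [hf_comp_neg] using ((IntervalIntegrable.iff_comp_neg).1 hint).symm
  have hreflect : ∫ x in -c..0, f x = ∫ x in 0..c, f x := by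
    simpa [hf_comp_neg] using (integral_comp_neg (a := 0) (b := c) f).symm
  rw [← integral_add_adjacent_intervals hint_neg hint, hreflect, two_smul]

theorem integral_comp_cos_sq_half (g : ℝ → E)
    (hg : IntervalIntegrable (fun θ ↦ g (cos θ ^ 2)) volume 0 (π / 2)) :
    ∫ ω in -π..π, g (cos (ω / 2) ^ 2) = (4 : ℝ) • ∫ θ in 0..π / 2, g (sin θ ^ 2) := by
  have hcos_sin : ∫ θ in 0..π / 2, g (cos θ ^ 2) = ∫ θ in 0..π / 2, g (sin θ ^ 2) := by
    simpa [sin_pi_div_two_sub] using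
      integral_comp_sub_left (a := 0) (b := π / 2) (fun θ ↦ g (sin θ ^ 2)) (π / 2)
  rw [integral_comp_div (fun θ ↦ g (cos θ ^ 2)) two_ne_zero, neg_div,
    integral_neg_self_eq_two_smul_of_even (fun _ ↦ by simp) hg, hcos_sin, smul_smul]
  norm_num

end intervalIntegral

theorem ellipticK_eq_intervalIntegral (k : ℝ) :
    ellipticK k = ∫ θ in 0..π / 2, 1 / √(1 - k ^ 2 * sin θ ^ 2) := by
  rw [ellipticK, integral_Icc_eq_integral_Ioc, intervalIntegral.integral_of_le (by positivity)]

theorem norm_ofReal_sub_exp_I_mul (b ω : ℝ) :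
    ‖(b : ℂ) - Complex.exp (Complex.I * ω)‖ = √((1 + b) ^ 2 - 4 * b * cos (ω / 2) ^ 2) := by
  have hre_im : (b : ℂ) - Complex.exp (Complex.I * ω)
      = ((b - cos ω : ℝ) : ℂ) + ((-sin ω : ℝ) : ℂ) * Complex.I := by
    rw [mul_comm, Complex.exp_mul_I, ← Complex.ofReal_cos, ← Complex.ofReal_sin]
    push_cast
    ring
  have hcos : cos ω = 2 * cos (ω / 2) ^ 2 - 1 := by
    rw [cos_sq (ω / 2)]; ring_nf
  rw [hre_im, Complex.norm_def, Complex.normSq_add_mul_I]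
  congr 1
  linear_combination sin_sq_add_cos_sq ω - 2 * b * hcos

theorem integral_inv_sqrt_one_sub_mul_cos_sq_half {k : ℝ} (hk : k ^ 2 < 1) :
    ∫ ω in -π..π, 1 / √(1 - k ^ 2 * cos (ω / 2) ^ 2) = 4 * ellipticK k := by
  have hpos (θ : ℝ) : 0 < 1 - k ^ 2 * cos θ ^ 2 := by
    nlinarith [cos_sq_le_one θ, mul_le_mul_of_nonneg_left (cos_sq_le_one θ) (sq_nonneg k)]
  have hcont : Continuous fun θ ↦ 1 / √(1 - k ^ 2 * cos θ ^ 2) :=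
    continuous_const.div (by fun_prop) fun θ ↦ (sqrt_pos.2 (hpos θ)).ne'
  rw [intervalIntegral.integral_comp_cos_sq_half (fun x ↦ 1 / √(1 - k ^ 2 * x))
    (hcont.intervalIntegrable _ _), ellipticK_eq_intervalIntegral, smul_eq_mul]

theorem integral_inv_modulus_eq_ellipticK (a : ℝ) (ha0 : 0 < a) (ha1 : a < 1) :
    (∫ ω in Set.Icc (-π) π,
        1 / ‖(1 : ℂ) - (a : ℂ) - Complex.exp (Complex.I * (ω : ℂ))‖)
      = (4 / (2 - a)) * ellipticK (Real.sqrt (1 - a) / (1 - a / 2)) := by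
  set k := √(1 - a) / (1 - a / 2)
  have h2a : 0 < 2 - a := by linarith
  have hk_sq : k ^ 2 = 4 * (1 - a) / (2 - a) ^ 2 := by
    rw [div_pow, sq_sqrt (by linarith)]
    field_simp
    ring
  have hk : k ^ 2 < 1 := by
    rw [hk_sq, div_lt_one (by positivity)]
    nlinarith
  have hnorm (ω : ℝ) : ‖(1 : ℂ) - a - Complex.exp (Complex.I * ω)‖
      = (2 - a) * √(1 - k ^ 2 * cos (ω / 2) ^ 2) := by
    have h := norm_ofReal_sub_exp_I_mul (1 - a) ω
    push_cast at h
    rw [h, ← sqrt_sq h2a.le, ← sqrt_mul (sq_nonneg _), hk_sq]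
    congr 1
    field_simp
    ring
  calc (∫ ω in Set.Icc (-π) π, 1 / ‖(1 : ℂ) - a - Complex.exp (Complex.I * ω)‖)
      = ∫ ω in -π..π, (2 - a)⁻¹ * (1 / √(1 - k ^ 2 * cos (ω / 2) ^ 2)) := by
        rw [integral_Icc_eq_integral_Ioc, ← intervalIntegral.integral_of_le (by linarith [pi_pos])]
        refine intervalIntegral.integral_congr fun ω _ ↦ ?_
        rw [hnorm, one_div, one_div, mul_inv]
    _ = (4 / (2 - a)) * ellipticK k := by
        rw [intervalIntegral.integral_const_mul, integral_inv_sqrt_one_sub_mul_cos_sq_half hk]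
        ring
end

section
/- For every real number a with 0 < a < 1, one has ∫_{−π}^{π} dω / |1 − a − e^{iω}| ≤ 5·log(8/a). -/
/-!
Expanding, `|1 - a - e^{iω}|² = a² + 2(1 - a)(1 - cos ω)`. This is at least `a²`, and, since
`1 - cos ω ≥ 2ω²/π²` on `[-π, π]`, at least `(2ω/5)²` once `1 - a ≥ π²/25`. For such `a` the
integrand is at most `1/a` on `[-a, a]` and at most `5/(2|ω|)` elsewhere, so the integral is at
most `2 + 5 log(π/a)`. For the remaining `a`, which are close to `1`, the bound `2π/a` suffices.
-/

open MeasureTheory Real Set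

lemma sq_norm_one_sub_sub_exp_I_mul (a ω : ℝ) :
    ‖(1 : ℂ) - (a : ℂ) - Complex.exp (Complex.I * (ω : ℂ))‖ ^ 2
      = a ^ 2 + 2 * (1 - a) * (1 - cos ω) := by
  rw [mul_comm, Complex.exp_mul_I, ← Complex.ofReal_cos, ← Complex.ofReal_sin,
    Complex.sq_norm, Complex.normSq_apply]
  simp only [Complex.sub_re, Complex.sub_im, Complex.add_re, Complex.add_im, Complex.one_re,
    Complex.one_im, Complex.ofReal_re, Complex.ofReal_im, Complex.mul_re, Complex.mul_im,
    Complex.I_re, Complex.I_im]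
  nlinarith [sin_sq_add_cos_sq ω]

lemma le_norm_one_sub_sub_exp_I_mul {a : ℝ} (ha0 : 0 ≤ a) (ha1 : a ≤ 1) (ω : ℝ) :
    a ≤ ‖(1 : ℂ) - (a : ℂ) - Complex.exp (Complex.I * (ω : ℂ))‖ := by
  rw [← pow_le_pow_iff_left₀ ha0 (norm_nonneg _) two_ne_zero, sq_norm_one_sub_sub_exp_I_mul]
  nlinarith [cos_le_one ω]

lemma abs_mul_le_norm_one_sub_sub_exp_I_mul {a ω : ℝ} (ha : a ≤ 1 - π ^ 2 / 25) (hω : |ω| ≤ π) :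
    2 / 5 * |ω| ≤ ‖(1 : ℂ) - (a : ℂ) - Complex.exp (Complex.I * (ω : ℂ))‖ := by
  rw [← pow_le_pow_iff_left₀ (by positivity) (norm_nonneg _) two_ne_zero,
    sq_norm_one_sub_sub_exp_I_mul, mul_pow, sq_abs]
  have hcos : 2 / π ^ 2 * ω ^ 2 ≤ 1 - cos ω := by
    linarith [cos_le_one_sub_mul_cos_sq hω]
  have hmul : 2 * (π ^ 2 / 25) * (2 / π ^ 2 * ω ^ 2) ≤ 2 * (1 - a) * (1 - cos ω) := by
    gcongr
    · nlinarith [pi_le_four, pi_pos]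
    · linarith
  have hπ : π ^ 2 ≠ 0 := by positivity
  calc (2 / 5) ^ 2 * ω ^ 2 = 2 * (π ^ 2 / 25) * (2 / π ^ 2 * ω ^ 2) := by field_simp; ring
    _ ≤ a ^ 2 + 2 * (1 - a) * (1 - cos ω) := by nlinarith

lemma integral_le_mul_log_of_le_div {f : ℝ → ℝ} {a b C : ℝ} (ha : 0 < a) (hab : a ≤ b)
    (hf : IntervalIntegrable f volume a b) (hfC : ∀ x ∈ Icc a b, f x ≤ C / x) :
    ∫ x in a..b, f x ≤ C * log (b / a) := by
  have hinv : IntervalIntegrable (fun x => C / x) volume a b := by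
    refine (continuousOn_const.div continuousOn_id fun x hx => ?_).intervalIntegrable
    rw [uIcc_of_le hab] at hx
    exact (ha.trans_le hx.1).ne'
  calc ∫ x in a..b, f x ≤ ∫ x in a..b, C / x :=
        intervalIntegral.integral_mono_on hab hf hinv hfC
    _ = C * log (b / a) := by
      simp only [div_eq_mul_inv C, intervalIntegral.integral_const_mul,
        integral_inv_of_pos ha (ha.trans_le hab)]

lemma integral_le_two_add_mul_log {f : ℝ → ℝ} {a b C : ℝ} (ha : 0 < a) (hab : a ≤ b)
    (hf : IntervalIntegrable f volume (-b) b) (hfa : ∀ x ∈ Icc (-a) a, f x ≤ a⁻¹)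
    (hfC : ∀ x, a ≤ |x| → |x| ≤ b → f x ≤ C / |x|) :
    ∫ x in -b..b, f x ≤ 2 + 2 * C * log (b / a) := by
  have hsub {c d : ℝ} (hc : -b ≤ c) (hcd : c ≤ d) (hd : d ≤ b) :
      IntervalIntegrable f volume c d :=
    hf.mono_set (by rw [uIcc_of_le hcd, uIcc_of_le (by linarith)]; exact Icc_subset_Icc hc hd)
  have hleft : ∫ x in -b..-a, f x ≤ C * log (b / a) := by
    rw [← intervalIntegral.integral_comp_neg]
    refine integral_le_mul_log_of_le_div ha hab ?_ fun x hx => ?_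
    · simpa using (IntervalIntegrable.iff_comp_neg).mp
        (hsub le_rfl (neg_le_neg hab) (by linarith)).symm
    · have hx' : |-x| = x := by rw [abs_neg, abs_of_pos (ha.trans_le hx.1)]
      simpa [hx'] using hfC (-x) (by rw [hx']; exact hx.1) (by rw [hx']; exact hx.2)
  have hmid : ∫ x in -a..a, f x ≤ 2 :=
    calc ∫ x in -a..a, f x ≤ ∫ _ in -a..a, a⁻¹ :=
          intervalIntegral.integral_mono_on (by linarith) (hsub (by linarith) (by linarith) hab)
            intervalIntegrable_const hfa
      _ = 2 := by rw [intervalIntegral.integral_const, smul_eq_mul]; field_simp; ring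
  have hright : ∫ x in a..b, f x ≤ C * log (b / a) := by
    refine integral_le_mul_log_of_le_div ha hab (hsub (by linarith) hab le_rfl) fun x hx => ?_
    have hx' : |x| = x := abs_of_pos (ha.trans_le hx.1)
    simpa [hx'] using hfC x (by rw [hx']; exact hx.1) (by rw [hx']; exact hx.2)
  rw [← intervalIntegral.integral_add_adjacent_intervals (b := -a)
      (hsub le_rfl (by linarith) (by linarith)) (hsub (by linarith) (by linarith) le_rfl),
    ← intervalIntegral.integral_add_adjacent_intervals (b := a)
      (hsub (by linarith) (by linarith) hab) (hsub (by linarith) hab le_rfl)]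
  linarith

lemma two_add_five_mul_log_pi_div_le {a : ℝ} (ha : 0 < a) :
    2 + 5 * log (π / a) ≤ 5 * log (8 / a) := by
  have hsplit : log (8 / a) = log (8 / π) + log (π / a) := by
    rw [← log_mul (by positivity) (by positivity)]
    field_simp
  have h2 : log 2 ≤ log (8 / π) :=
    log_le_log two_pos (by rw [le_div_iff₀ pi_pos]; linarith [pi_le_four])
  linarith [log_two_gt_d9]

lemma two_mul_pi_div_le_five_mul_log {a : ℝ} (ha : 1 - π ^ 2 / 25 < a) (ha1 : a ≤ 1) :
    2 * π / a ≤ 5 * log (8 / a) := by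
  have hπ : 0 < 1 - π ^ 2 / 25 := by nlinarith [pi_le_four, pi_pos]
  have hlog8 : 3 * log 2 ≤ log (8 / a) := by
    rw [← Nat.cast_ofNat, ← log_pow]
    exact log_le_log (by norm_num) (by rw [le_div_iff₀ (by linarith)]; linarith)
  calc 2 * π / a ≤ 2 * π / (1 - π ^ 2 / 25) := by gcongr
    _ ≤ 5 * (3 * log 2) := by
      rw [div_le_iff₀ hπ]
      nlinarith [pi_lt_d6, pi_gt_d6, log_two_gt_d9]
    _ ≤ 5 * log (8 / a) := by linarith

theorem integral_inv_modulus_le (a : ℝ) (ha0 : 0 < a) (ha1 : a < 1) :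
    (∫ ω in Set.Icc (-π) π,
        1 / ‖(1 : ℂ) - (a : ℂ) - Complex.exp (Complex.I * (ω : ℂ))‖)
      ≤ 5 * Real.log (8 / a) := by
  have hle (ω : ℝ) := le_norm_one_sub_sub_exp_I_mul ha0.le ha1.le ω
  have hinv (ω : ℝ) : 1 / ‖(1 : ℂ) - (a : ℂ) - Complex.exp (Complex.I * (ω : ℂ))‖ ≤ a⁻¹ := by
    rw [one_div]
    exact inv_anti₀ ha0 (hle ω)
  have hint : IntervalIntegrable
      (fun ω : ℝ => 1 / ‖(1 : ℂ) - (a : ℂ) - Complex.exp (Complex.I * (ω : ℂ))‖) volume (-π) π :=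
    (continuous_const.div (by fun_prop) fun ω => (ha0.trans_le (hle ω)).ne').intervalIntegrable _ _
  rw [integral_Icc_eq_integral_Ioc, ← intervalIntegral.integral_of_le (by linarith [pi_pos])]
  rcases le_or_gt a (1 - π ^ 2 / 25) with hsmall | hlarge
  · refine (integral_le_two_add_mul_log (C := 5 / 2) ha0 (by linarith [pi_gt_three]) hint
      (fun ω _ => hinv ω) fun ω haω hωπ => ?_).trans
      (by linarith [two_add_five_mul_log_pi_div_le ha0])
    rw [div_le_div_iff₀ (ha0.trans_le (hle ω)) (ha0.trans_le haω)]
    linarith [abs_mul_le_norm_one_sub_sub_exp_I_mul hsmall hωπ]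
  · calc _ ≤ ∫ _ in (-π)..π, a⁻¹ :=
          intervalIntegral.integral_mono_on (by linarith [pi_pos]) hint
            intervalIntegrable_const fun ω _ => hinv ω
      _ = 2 * π / a := by rw [intervalIntegral.integral_const, smul_eq_mul]; ring
      _ ≤ 5 * log (8 / a) := two_mul_pi_div_le_five_mul_log hlarge ha1.le
end

section
/- There exists a universal constant C > 0 such that for all real numbers a, b with 0 < a ≤ b ≤ 1/4, one has ∫_{−π}^{π} |1 − a − e^{iω}| / |1 − b − e^{iω}|² dω ≤ C·log(8/a). -/
/-!
Write `e = exp (i ω)`. By the triangle inequality `|1 - a - e| ≤ a + |1 - e| ≤ a + |ω|`, while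
`|1 - b - e|² = b² + 2 (1 - b) (1 - cos ω)` and the bound `1 - cos ω ≥ 2 ω² / π²` on `[-π, π]` give
`|1 - b - e|² ≥ (b + |ω|)² / 7`. Hence the integrand is at most `7 / (b + |ω|)`, whose integral
over `[-π, π]` is `14 log ((b + π) / b) ≤ 14 log (8 / a)`.
-/

open MeasureTheory Real

theorem intervalIntegral.integral_comp_abs_of_nonneg {f : ℝ → ℝ} {r : ℝ} (hr : 0 ≤ r)
    (hf : IntervalIntegrable (fun x ↦ f |x|) volume (-r) r) :
    ∫ x in -r..r, f |x| = 2 * ∫ x in 0..r, f x := by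
  have hpos : ∫ x in 0..r, f |x| = ∫ x in 0..r, f x :=
    intervalIntegral.integral_congr fun x hx ↦ by
      rw [Set.uIcc_of_le hr] at hx
      rw [abs_of_nonneg hx.1]
  have hneg : ∫ x in -r..0, f |x| = ∫ x in 0..r, f |x| := by
    simpa only [abs_neg, neg_zero] using (intervalIntegral.integral_comp_neg (a := 0) (b := r)
      (fun x ↦ f |x|)).symm
  rw [← intervalIntegral.integral_add_adjacent_intervals (b := 0)
      (hf.mono_set (Set.uIcc_subset_uIcc_left (by simp [hr])))
      (hf.mono_set (Set.uIcc_subset_uIcc_right (by simp [hr]))), hneg, hpos]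
  ring

theorem integral_Icc_inv_add_abs {b r : ℝ} (hb : 0 < b) (hr : 0 ≤ r) :
    ∫ x in Set.Icc (-r) r, (b + |x|)⁻¹ = 2 * log ((b + r) / b) := by
  have hcont : Continuous fun x : ℝ ↦ (b + |x|)⁻¹ :=
    (continuous_const.add continuous_abs).inv₀ fun x ↦
      (add_pos_of_pos_of_nonneg hb (abs_nonneg x)).ne'
  rw [integral_Icc_eq_integral_Ioc, ← intervalIntegral.integral_of_le (by linarith),
    intervalIntegral.integral_comp_abs_of_nonneg (f := fun x ↦ (b + x)⁻¹) hr
      (hcont.intervalIntegrable _ _),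
    intervalIntegral.integral_comp_add_left (fun x ↦ x⁻¹), add_zero,
    integral_inv_of_pos hb (by linarith)]

theorem norm_one_sub_ofReal_sub_exp_sq (c ω : ℝ) :
    ‖1 - (c : ℂ) - Complex.exp (Complex.I * ω)‖ ^ 2 = c ^ 2 + 2 * (1 - c) * (1 - cos ω) := by
  rw [mul_comm, Complex.sq_norm, Complex.normSq_apply]
  simp only [Complex.sub_re, Complex.sub_im, Complex.one_re, Complex.one_im, Complex.ofReal_re,
    Complex.ofReal_im, Complex.exp_ofReal_mul_I_re, Complex.exp_ofReal_mul_I_im]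
  linear_combination sin_sq_add_cos_sq ω

theorem norm_one_sub_ofReal_sub_exp_le (c ω : ℝ) :
    ‖1 - (c : ℂ) - Complex.exp (Complex.I * ω)‖ ≤ |c| + |ω| := by
  calc ‖1 - (c : ℂ) - Complex.exp (Complex.I * ω)‖
      = ‖-(c : ℂ) - (Complex.exp (Complex.I * ω) - 1)‖ := by ring_nf
    _ ≤ ‖-(c : ℂ)‖ + ‖Complex.exp (Complex.I * ω) - 1‖ := norm_sub_le _ _
    _ ≤ |c| + |ω| := by
      rw [norm_neg, Complex.norm_real, norm_eq_abs, ← norm_eq_abs ω]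
      gcongr
      exact norm_exp_I_mul_ofReal_sub_one_le

theorem sq_add_abs_le_mul_norm_one_sub_ofReal_sub_exp_sq {b ω : ℝ} (hb : b ≤ 1 / 4)
    (hω : |ω| ≤ π) :
    (b + |ω|) ^ 2 ≤ 7 * ‖1 - (b : ℂ) - Complex.exp (Complex.I * ω)‖ ^ 2 := by
  have hcos : 2 * ω ^ 2 ≤ π ^ 2 * (1 - cos ω) := by
    have := cos_le_one_sub_mul_cos_sq hω
    field_simp at this
    linarith
  have hπ : π ^ 2 < 10 := by nlinarith [pi_lt_d2, pi_pos]
  rw [norm_one_sub_ofReal_sub_exp_sq]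
  nlinarith [sq_nonneg (b - |ω|), sq_abs ω, cos_le_one ω,
    mul_nonneg (sub_nonneg.2 hb) (sub_nonneg.2 (cos_le_one ω))]

theorem norm_one_sub_sub_exp_div_sq_le {a b ω : ℝ} (ha : |a| ≤ b) (hb₀ : 0 < b)
    (hb : b ≤ 1 / 4) (hω : |ω| ≤ π) :
    ‖1 - (a : ℂ) - Complex.exp (Complex.I * ω)‖ /
        ‖1 - (b : ℂ) - Complex.exp (Complex.I * ω)‖ ^ 2 ≤ 7 * (b + |ω|)⁻¹ := by
  have hpos : 0 < b + |ω| := by positivity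
  calc ‖1 - (a : ℂ) - Complex.exp (Complex.I * ω)‖ /
        ‖1 - (b : ℂ) - Complex.exp (Complex.I * ω)‖ ^ 2
      ≤ (b + |ω|) / ((b + |ω|) ^ 2 / 7) := by
        gcongr
        · exact (norm_one_sub_ofReal_sub_exp_le a ω).trans (by linarith)
        · linarith [sq_add_abs_le_mul_norm_one_sub_ofReal_sub_exp_sq hb hω]
    _ = 7 * (b + |ω|)⁻¹ := by field_simp

theorem exists_const_integral_ratio_le :
    ∃ C : ℝ, 0 < C ∧ ∀ a b : ℝ, 0 < a → a ≤ b → b ≤ 1 / 4 →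
      (∫ ω in Set.Icc (-π) π,
          ‖(1 : ℂ) - (a : ℂ) - Complex.exp (Complex.I * (ω : ℂ))‖ /
            ‖(1 : ℂ) - (b : ℂ) - Complex.exp (Complex.I * (ω : ℂ))‖ ^ 2)
        ≤ C * Real.log (8 / a) := by
  refine ⟨14, by norm_num, fun a b ha hab hb ↦ ?_⟩
  have hb₀ : 0 < b := ha.trans_le hab
  have hlog : log ((b + π) / b) ≤ log (8 / a) := by
    refine log_le_log (by positivity) ?_
    rw [div_le_div_iff₀ hb₀ ha]
    nlinarith [pi_lt_d2]
  calc (∫ ω in Set.Icc (-π) π,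
        ‖(1 : ℂ) - (a : ℂ) - Complex.exp (Complex.I * (ω : ℂ))‖ /
          ‖(1 : ℂ) - (b : ℂ) - Complex.exp (Complex.I * (ω : ℂ))‖ ^ 2)
      ≤ ∫ ω in Set.Icc (-π) π, 7 * (b + |ω|)⁻¹ := by
        refine integral_mono_of_nonneg (.of_forall fun ω ↦ by positivity)
          (Continuous.integrableOn_Icc (by fun_prop (disch := intro; positivity))) ?_
        refine (ae_restrict_iff' measurableSet_Icc).2 (.of_forall fun ω hω ↦ ?_)
        exact norm_one_sub_sub_exp_div_sq_le (by rwa [abs_of_pos ha]) hb₀ hb (abs_le.2 hω)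
    _ = 14 * log ((b + π) / b) := by
        rw [integral_const_mul, integral_Icc_inv_add_abs hb₀ pi_pos.le]
        ring
    _ ≤ 14 * log (8 / a) := by gcongr
end

section
/- Let (Ω, P) be a probability space and x : Ω → ℝ^d a random vector with E[x] = 0 such that the matrix H := E[x xᵀ] exists (each entry integrable), H ⪰ μ·I for some μ > 0, and E[‖x‖₂² · x xᵀ] ⪯ R²·H for some R > 0 (each entry of ‖x‖₂² x xᵀ integrable). Then for every step size η with 0 < η ≤ 1/R² and every real symmetric positive semidefinite d×d matrix M, one has E[tr((I − η x xᵀ)·M·(I − η x xᵀ))] ≤ (1 − η μ)·tr(M). -/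
/-!
Writing `A = x xᵀ`, cyclicity of the trace and `A² = ‖x‖² A` give
`E tr((I - η A) M (I - η A)) = tr M - 2η tr(M H) + η² tr(M G)` with `G = E[‖x‖² x xᵀ]`.
For `M ⪰ 0` the map `X ↦ tr(M X)` is monotone in the Loewner order, so `tr(M G) ≤ R² tr(M H)`,
and `η R² ≤ 1` bounds the quadratic term by `η tr(M H)`, so the expectation is at most
`tr M - η tr(M H) ≤ (1 - η μ) tr M`.
-/

open MeasureTheory Matrix

namespace Matrix

section PosSemidef

open scoped MatrixOrder ComplexOrder

variable {n 𝕜 : Type*} [Fintype n] [DecidableEq n] [RCLike 𝕜]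

theorem PosSemidef.trace_mul_nonneg {A B : Matrix n n 𝕜} (hA : A.PosSemidef)
    (hB : B.PosSemidef) : 0 ≤ (A * B).trace := by
  obtain ⟨S, rfl⟩ := CStarAlgebra.nonneg_iff_eq_star_mul_self.mp hA.nonneg
  rw [star_eq_conjTranspose, Matrix.mul_assoc, trace_mul_comm]
  exact (hB.mul_mul_conjTranspose_same S).trace_nonneg

theorem PosSemidef.trace_mul_le_trace_mul {M A B : Matrix n n 𝕜} (hM : M.PosSemidef)
    (hAB : (B - A).PosSemidef) : (M * A).trace ≤ (M * B).trace := by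
  simpa [mul_sub, trace_sub] using hM.trace_mul_nonneg hAB

end PosSemidef

variable {n R : Type*} [Fintype n] [CommRing R]

theorem vecMulVec_self_mul_self (v : n → R) :
    vecMulVec v v * vecMulVec v v = (∑ k, v k ^ 2) • vecMulVec v v := by
  rw [vecMulVec_mul_vecMulVec, vecMulVec_smul]
  simp [dotProduct, sq]

theorem trace_one_sub_smul_mul_mul_one_sub_smul [DecidableEq n] (η : R) (A M : Matrix n n R) :
    ((1 - η • A) * M * (1 - η • A)).trace
      = M.trace - 2 * η * (M * A).trace + η ^ 2 * (M * (A * A)).trace := by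
  have hAM : (A * M).trace = (M * A).trace := trace_mul_comm A M
  have hAMA : (A * M * A).trace = (M * (A * A)).trace := by
    rw [Matrix.mul_assoc, trace_mul_comm, Matrix.mul_assoc]
  have hexpand : (1 - η • A) * M * (1 - η • A)
      = M - η • (A * M) - η • (M * A) + (η * η) • (A * M * A) := by
    simp only [sub_mul, mul_sub, one_mul, mul_one, Matrix.smul_mul, Matrix.mul_smul, smul_smul]
    abel
  rw [hexpand]
  simp only [trace_add, trace_sub, trace_smul, hAM, hAMA, smul_eq_mul]
  ring

end Matrix

section Integral

variable {Ω n : Type*} [MeasurableSpace Ω] {P : Measure Ω} [Fintype n]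

theorem integrable_trace_mul_of_integrable_apply (M : Matrix n n ℝ) {f : Ω → Matrix n n ℝ}
    (hf : ∀ i j, Integrable (fun ω => f ω i j) P) :
    Integrable (fun ω => (M * f ω).trace) P := by
  simp only [trace, diag, mul_apply]
  exact integrable_finsetSum _ fun i _ =>
    integrable_finsetSum _ fun j _ => (hf j i).const_mul (M i j)

theorem integral_trace_mul (M : Matrix n n ℝ) {f : Ω → Matrix n n ℝ}
    (hf : ∀ i j, Integrable (fun ω => f ω i j) P) :
    ∫ ω, (M * f ω).trace ∂P = (M * of fun i j => ∫ ω, f ω i j ∂P).trace := by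
  simp only [trace, diag, mul_apply, of_apply]
  rw [integral_finsetSum _ fun i _ =>
    integrable_finsetSum _ fun j _ => (hf j i).const_mul (M i j)]
  refine Finset.sum_congr rfl fun i _ => ?_
  rw [integral_finsetSum _ fun j _ => (hf j i).const_mul (M i j)]
  exact Finset.sum_congr rfl fun j _ => integral_const_mul _ _

theorem integral_trace_one_sub_smul_vecMulVec_mul_mul [DecidableEq n] [IsProbabilityMeasure P]
    (η : ℝ) (M : Matrix n n ℝ) {x : Ω → n → ℝ}
    (hx2 : ∀ i j, Integrable (fun ω => x ω i * x ω j) P)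
    (hx4 : ∀ i j, Integrable (fun ω => (∑ k, x ω k ^ 2) * (x ω i * x ω j)) P) :
    ∫ ω, ((1 - η • vecMulVec (x ω) (x ω)) * M * (1 - η • vecMulVec (x ω) (x ω))).trace ∂P
      = M.trace - 2 * η * (M * of fun i j => ∫ ω, x ω i * x ω j ∂P).trace
        + η ^ 2 * (M * of fun i j => ∫ ω, (∑ k, x ω k ^ 2) * (x ω i * x ω j) ∂P).trace := by
  have hint_H := integrable_trace_mul_of_integrable_apply
    (f := fun ω => vecMulVec (x ω) (x ω)) M hx2
  have hint_G := integrable_trace_mul_of_integrable_apply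
    (f := fun ω => (∑ k, x ω k ^ 2) • vecMulVec (x ω) (x ω)) M hx4
  simp_rw [trace_one_sub_smul_mul_mul_one_sub_smul, vecMulVec_self_mul_self]
  rw [integral_add (by fun_prop) (by fun_prop), integral_sub (by fun_prop) (by fun_prop),
    integral_const, integral_const_mul, integral_const_mul, probReal_univ, one_smul,
    integral_trace_mul (f := fun ω => vecMulVec (x ω) (x ω)) M hx2,
    integral_trace_mul (f := fun ω => (∑ k, x ω k ^ 2) • vecMulVec (x ω) (x ω)) M hx4]
  rfl

end Integral

theorem expected_trace_contraction_general {Ω : Type*} [MeasurableSpace Ω]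
    (P : Measure Ω) [IsProbabilityMeasure P]
    (d : ℕ) (x : Ω → Fin d → ℝ)
    (H : Matrix (Fin d) (Fin d) ℝ)
    (hH_int : ∀ i j, Integrable (fun ω => x ω i * x ω j) P)
    (hH : ∀ i j, H i j = ∫ ω, x ω i * x ω j ∂P)
    (μ : ℝ) (hμ : 0 < μ)
    (hHμ : (H - μ • (1 : Matrix (Fin d) (Fin d) ℝ)).PosSemidef)
    (R : ℝ) (hR : 0 < R)
    (hM4_int : ∀ i j, Integrable (fun ω => (∑ k, x ω k ^ 2) * (x ω i * x ω j)) P)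
    (hM4 : (R ^ 2 • H -
        Matrix.of fun i j => ∫ ω, (∑ k, x ω k ^ 2) * (x ω i * x ω j) ∂P).PosSemidef)
    (η : ℝ) (hη0 : 0 < η) (hη : η ≤ 1 / R ^ 2)
    (M : Matrix (Fin d) (Fin d) ℝ) (hM : M.PosSemidef) :
    (∫ ω, Matrix.trace
        (((1 : Matrix (Fin d) (Fin d) ℝ) - η • Matrix.vecMulVec (x ω) (x ω)) * M *
          ((1 : Matrix (Fin d) (Fin d) ℝ) - η • Matrix.vecMulVec (x ω) (x ω))) ∂P)
      ≤ (1 - η * μ) * Matrix.trace M := by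
  set G : Matrix (Fin d) (Fin d) ℝ :=
    of fun i j => ∫ ω, (∑ k, x ω k ^ 2) * (x ω i * x ω j) ∂P
  have hH' : H = of fun i j => ∫ ω, x ω i * x ω j ∂P := ext hH
  have hμH : μ * M.trace ≤ (M * H).trace := by
    simpa using hM.trace_mul_le_trace_mul hHμ
  have hGH : (M * G).trace ≤ R ^ 2 * (M * H).trace := by
    simpa using hM.trace_mul_le_trace_mul hM4
  have hηR : η * R ^ 2 ≤ 1 := (le_div_iff₀ (by positivity)).mp hη
  have htrMH : 0 ≤ (M * H).trace := le_trans (mul_nonneg hμ.le hM.trace_nonneg) hμH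
  calc _ = M.trace - 2 * η * (M * H).trace + η ^ 2 * (M * G).trace := by
        rw [integral_trace_one_sub_smul_vecMulVec_mul_mul η M hH_int hM4_int, hH']
    _ ≤ M.trace - 2 * η * (M * H).trace + η ^ 2 * (R ^ 2 * (M * H).trace) := by gcongr
    _ ≤ M.trace - η * (M * H).trace := by
        linarith [mul_le_mul_of_nonneg_left (mul_le_mul_of_nonneg_right hηR htrMH) hη0.le]
    _ ≤ (1 - η * μ) * M.trace := by linarith [mul_le_mul_of_nonneg_left hμH hη0.le]

theorem expected_trace_contraction {Ω : Type*} [MeasurableSpace Ω]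
    (P : Measure Ω) [IsProbabilityMeasure P]
    (d : ℕ) (x : Ω → Fin d → ℝ)
    (hmean_int : ∀ i, Integrable (fun ω => x ω i) P)
    (hmean : ∀ i, (∫ ω, x ω i ∂P) = 0)
    (H : Matrix (Fin d) (Fin d) ℝ)
    (hH_int : ∀ i j, Integrable (fun ω => x ω i * x ω j) P)
    (hH : ∀ i j, H i j = ∫ ω, x ω i * x ω j ∂P)
    (μ : ℝ) (hμ : 0 < μ)
    (hHμ : (H - μ • (1 : Matrix (Fin d) (Fin d) ℝ)).PosSemidef)
    (R : ℝ) (hR : 0 < R)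
    (hM4_int : ∀ i j, Integrable (fun ω => (∑ k, x ω k ^ 2) * (x ω i * x ω j)) P)
    (hM4 : (R ^ 2 • H -
        Matrix.of fun i j => ∫ ω, (∑ k, x ω k ^ 2) * (x ω i * x ω j) ∂P).PosSemidef)
    (η : ℝ) (hη0 : 0 < η) (hη : η ≤ 1 / R ^ 2)
    (M : Matrix (Fin d) (Fin d) ℝ) (hM : M.PosSemidef) :
    (∫ ω, Matrix.trace
        (((1 : Matrix (Fin d) (Fin d) ℝ) - η • Matrix.vecMulVec (x ω) (x ω)) * M *
          ((1 : Matrix (Fin d) (Fin d) ℝ) - η • Matrix.vecMulVec (x ω) (x ω))) ∂P)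
      ≤ (1 - η * μ) * Matrix.trace M :=
  expected_trace_contraction_general P d x H hH_int hH μ hμ hHμ R hR hM4_int hM4 η hη0 hη M hM
end

section
/- Let z be a random vector in ℝ^d whose coordinates are independent standard Gaussian random variables, let H be a real symmetric positive semidefinite d×d matrix, and set x = H^{1/2} z, where H^{1/2} is the positive semidefinite square root of H. Then E[‖x‖₂² · x xᵀ] = 2H² + tr(H)·H, and consequently E[‖x‖₂² · x xᵀ] ⪯ 3·tr(H)·H. -/
/-!
With `S = H^{1/2}` symmetric and `x = S z`, Isserlis' theorem
`E[z_a z_b z_c z_e] = δ_ab δ_ce + δ_ac δ_be + δ_ae δ_bc` (independent coordinates with `E[z²] = 1`,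
`E[z⁴] = 3`) gives `E[(p⬝z)(q⬝z)(r⬝z)(s⬝z)] = (p⬝q)(r⬝s) + (p⬝r)(q⬝s) + (p⬝s)(q⬝r)`; summing over
the rows of `S` yields `2 G² + tr(G) G` with `G = S Sᵀ = H`. The bound is `2 (tr(H) H - H²) ⪰ 0`:
in an eigenbasis of `H` this is diagonal with entries `λ (tr H - λ)`, and `0 ≤ λ ≤ tr H`.
-/

open MeasureTheory ProbabilityTheory Matrix

/-- The square root of a positive semidefinite matrix, as defined in Mathlib (Dec 2024). -/
noncomputable def Matrix.PosSemidef.sqrt {d : ℕ} {H : Matrix (Fin d) (Fin d) ℝ}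
    (hH : H.PosSemidef) : Matrix (Fin d) (Fin d) ℝ :=
  hH.1.eigenvectorUnitary.1 * diagonal ((↑) ∘ (√·) ∘ hH.1.eigenvalues) *
    (star hH.1.eigenvectorUnitary : Matrix (Fin d) (Fin d) ℝ)

open Real
open scoped NNReal Nat

lemma integrable_pow_gaussianReal (μ : ℝ) (v : ℝ≥0) (n : ℕ) :
    Integrable (fun x => x ^ n) (gaussianReal μ v) := by
  refine (integrable_norm_iff (by fun_prop)).1 ?_
  simpa [norm_pow] using (memLp_id_gaussianReal (μ := μ) (v := v) n).integrable_norm_pow'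

lemma integral_pow_two_mul_gaussianReal_zero_one (k : ℕ) :
    ∫ x, x ^ (2 * k) ∂gaussianReal 0 1 = (2 * k - 1)‼ := by
  have heven : ∀ x : ℝ,
      x ^ (2 * k) * exp (-(1 / 2) * x ^ 2) = |x| ^ (2 * k) * exp (-(1 / 2) * |x| ^ 2) := by
    intro x
    rw [pow_mul, pow_mul, sq_abs]
  calc ∫ x, x ^ (2 * k) ∂gaussianReal 0 1
      = (√(2 * π))⁻¹ * ∫ x, x ^ (2 * k) * exp (-(1 / 2) * x ^ 2) := by
        rw [integral_gaussianReal_eq_integral_smul one_ne_zero, ← integral_const_mul]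
        congr 1 with x
        simp only [gaussianPDFReal, NNReal.coe_one, mul_one, sub_zero, smul_eq_mul]
        ring_nf
    _ = (√(2 * π))⁻¹ *
          (2 * ∫ x in Set.Ioi 0, x ^ ((2 * k : ℕ) : ℝ) * exp (-(1 / 2) * x ^ (2 : ℝ))) := by
        rw [integral_congr_ae (Filter.Eventually.of_forall heven),
          integral_comp_abs (f := fun x => x ^ (2 * k) * exp (-(1 / 2) * x ^ 2))]
        congr 2
        refine setIntegral_congr_fun measurableSet_Ioi fun x _ => ?_
        simp only [rpow_natCast, rpow_two]
    _ = (2 * k - 1)‼ := by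
        rw [integral_rpow_mul_exp_neg_mul_rpow two_pos
          (neg_one_lt_zero.trans_le (Nat.cast_nonneg _)) one_half_pos,
          show (((2 * k : ℕ) : ℝ) + 1) / 2 = k + 1 / 2 by push_cast; ring, Gamma_nat_add_half]
        have h2 : (1 / 2 : ℝ) ^ (-((k : ℝ) + 1 / 2)) = 2 ^ k * √2 := by
          rw [one_div, inv_rpow zero_le_two, ← rpow_neg zero_le_two, neg_neg,
            rpow_add two_pos, rpow_natCast, sqrt_eq_rpow, one_div]
        rw [show -(((2 * k : ℕ) : ℝ) + 1) / 2 = -((k : ℝ) + 1 / 2) by push_cast; ring, h2,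
          sqrt_mul zero_le_two]
        field_simp

lemma integral_sq_gaussianReal_zero_one : ∫ x, x ^ 2 ∂gaussianReal 0 1 = 1 := by
  simpa using integral_pow_two_mul_gaussianReal_zero_one 1

lemma integral_pow_four_gaussianReal_zero_one : ∫ x, x ^ 4 ∂gaussianReal 0 1 = 3 := by
  simpa using integral_pow_two_mul_gaussianReal_zero_one 2

section StandardGaussianVector

variable {ι : Type*} [Fintype ι]

lemma mul_mul_mul_eq_prod_pow [DecidableEq ι] (z : ι → ℝ) (a b c e : ι) :
    z a * z b * z c * z e = ∏ i, z i ^ ((if a = i then 1 else 0) + (if b = i then 1 else 0) +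
      (if c = i then 1 else 0) + (if e = i then 1 else 0)) := by
  simp only [pow_add, Finset.prod_mul_distrib, pow_ite, pow_one, pow_zero, Finset.prod_ite_eq,
    Finset.mem_univ, if_true]

lemma integrable_prod_pow_pi_gaussianReal (n : ι → ℕ) :
    Integrable (fun z : ι → ℝ => ∏ i, z i ^ n i) (Measure.pi fun _ : ι => gaussianReal 0 1) :=
  Integrable.fintype_prod fun i => integrable_pow_gaussianReal 0 1 (n i)

lemma integral_prod_pow_pi_gaussianReal (n : ι → ℕ) :
    ∫ z, ∏ i, z i ^ n i ∂(Measure.pi fun _ : ι => gaussianReal 0 1)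
      = ∏ i, ∫ x, x ^ n i ∂gaussianReal 0 1 :=
  integral_fintype_prod_eq_prod fun i x => x ^ n i

lemma integrable_mul_mul_mul_pi_gaussianReal (a b c e : ι) :
    Integrable (fun z : ι → ℝ => z a * z b * z c * z e)
      (Measure.pi fun _ : ι => gaussianReal 0 1) := by
  classical
  simp_rw [mul_mul_mul_eq_prod_pow]
  exact integrable_prod_pow_pi_gaussianReal _

lemma integral_mul_mul_mul_pi_gaussianReal [DecidableEq ι] (a b c e : ι) :
    ∫ z, z a * z b * z c * z e ∂(Measure.pi fun _ : ι => gaussianReal 0 1)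
      = (if a = b then 1 else 0) * (if c = e then 1 else 0)
        + (if a = c then 1 else 0) * (if b = e then 1 else 0)
        + (if a = e then 1 else 0) * (if b = c then 1 else 0) := by
  simp_rw [mul_mul_mul_eq_prod_pow]
  rw [integral_prod_pow_pi_gaussianReal, ← Finset.prod_subset (Finset.subset_univ {a, b, c, e})
    fun i _ hi => by simp_all [eq_comm]]
  -- Both sides depend only on which of `a, b, c, e` coincide.
  by_cases hab : a = b <;> by_cases hac : a = c <;> by_cases hae : a = e <;>
    by_cases hbc : b = c <;> by_cases hbe : b = e <;> by_cases hce : c = e <;>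
    simp_all [Finset.prod_insert, integral_sq_gaussianReal_zero_one,
      integral_pow_four_gaussianReal_zero_one, eq_comm, one_add_one_eq_two, two_add_one_eq_three]

lemma dotProduct_mul_dotProduct_mul_eq_sum (p q r s z : ι → ℝ) :
    (p ⬝ᵥ z) * (q ⬝ᵥ z) * (r ⬝ᵥ z) * (s ⬝ᵥ z)
      = ∑ a, ∑ b, ∑ c, ∑ e, p a * q b * r c * s e * (z a * z b * z c * z e) := by
  have hfactor : ∀ a b c e, p a * q b * r c * s e * (z a * z b * z c * z e)
      = p a * z a * (q b * z b) * (r c * z c) * (s e * z e) := fun _ _ _ _ => by ring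
  simp only [hfactor, dotProduct, ← Finset.mul_sum, ← Finset.sum_mul]

lemma integrable_dotProduct_mul_pi_gaussianReal (p q r s : ι → ℝ) :
    Integrable (fun z => (p ⬝ᵥ z) * (q ⬝ᵥ z) * (r ⬝ᵥ z) * (s ⬝ᵥ z))
      (Measure.pi fun _ : ι => gaussianReal 0 1) := by
  have hmonomial := integrable_mul_mul_mul_pi_gaussianReal (ι := ι)
  simp_rw [dotProduct_mul_dotProduct_mul_eq_sum]
  fun_prop

lemma integral_dotProduct_mul_pi_gaussianReal (p q r s : ι → ℝ) :
    ∫ z, (p ⬝ᵥ z) * (q ⬝ᵥ z) * (r ⬝ᵥ z) * (s ⬝ᵥ z) ∂(Measure.pi fun _ : ι => gaussianReal 0 1)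
      = (p ⬝ᵥ q) * (r ⬝ᵥ s) + (p ⬝ᵥ r) * (q ⬝ᵥ s) + (p ⬝ᵥ s) * (q ⬝ᵥ r) := by
  classical
  have hmonomial := integrable_mul_mul_mul_pi_gaussianReal (ι := ι)
  simp_rw [dotProduct_mul_dotProduct_mul_eq_sum]
  simp (disch := intros; fun_prop) only [integral_finsetSum, integral_const_mul,
    integral_mul_mul_mul_pi_gaussianReal]
  simp only [mul_add, Finset.sum_add_distrib, mul_ite, mul_one, mul_zero, Finset.sum_ite_irrel,
    Finset.sum_const_zero, Finset.sum_ite_eq, Finset.mem_univ, if_true, dotProduct, Finset.sum_mul_sum]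
  simp only [mul_comm, mul_left_comm]

lemma integral_sum_sq_mulVec_mul_mulVec_pi_gaussianReal (S : Matrix ι ι ℝ) :
    (Matrix.of fun i j => ∫ z, (∑ k, (S *ᵥ z) k ^ 2) * ((S *ᵥ z) i * (S *ᵥ z) j)
        ∂(Measure.pi fun _ : ι => gaussianReal 0 1))
      = (2 : ℝ) • ((S * Sᵀ) * (S * Sᵀ)) + (S * Sᵀ).trace • (S * Sᵀ) := by
  ext i j
  have hexpand : ∀ z : ι → ℝ, (∑ k, (S *ᵥ z) k ^ 2) * ((S *ᵥ z) i * (S *ᵥ z) j)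
      = ∑ k, (S k ⬝ᵥ z) * (S k ⬝ᵥ z) * (S i ⬝ᵥ z) * (S j ⬝ᵥ z) := fun z => by
    simp only [Finset.sum_mul, sq, mul_assoc]
    rfl
  simp only [of_apply, hexpand]
  rw [integral_finsetSum _ fun k _ =>
    integrable_dotProduct_mul_pi_gaussianReal (S k) (S k) (S i) (S j)]
  set G := S * Sᵀ
  have hG : ∀ a b, S a ⬝ᵥ S b = G a b := fun _ _ => rfl
  simp only [integral_dotProduct_mul_pi_gaussianReal, hG, Matrix.add_apply, Matrix.smul_apply,
    smul_eq_mul, mul_apply, trace, diag_apply, Finset.mul_sum, Finset.sum_mul,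
    ← Finset.sum_add_distrib]
  refine Finset.sum_congr rfl fun k _ => ?_
  rw [← hG k i, dotProduct_comm, hG]
  ring

end StandardGaussianVector

namespace Matrix.PosSemidef

lemma trace_smul_sub_mul_self {n : Type*} [Fintype n] [DecidableEq n] {H : Matrix n n ℝ}
    (hH : H.PosSemidef) : (H.trace • H - H * H).PosSemidef := by
  set t := H.trace with ht
  set ev := hH.1.eigenvalues
  set U := hH.1.eigenvectorUnitary
  have hdiag : t • H - H * H
      = U.1 * diagonal (fun i => t * ev i - ev i * ev i) * (star U : Matrix n n ℝ) := by
    conv_lhs => rw [hH.1.spectral_theorem]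
    rw [← map_smul, ← map_mul, ← map_sub, Unitary.conjStarAlgAut_apply, diagonal_mul_diagonal,
      ← diagonal_smul, diagonal_sub]
    rfl
  have hle : ∀ i, ev i ≤ t := fun i => by
    rw [ht, hH.1.trace_eq_sum_eigenvalues]
    exact Finset.single_le_sum (fun j _ => hH.eigenvalues_nonneg j) (Finset.mem_univ i)
  rw [hdiag, star_eq_conjTranspose]
  refine PosSemidef.mul_mul_conjTranspose_same (PosSemidef.diagonal fun i => ?_) _
  show (0 : ℝ) ≤ _
  nlinarith [hH.eigenvalues_nonneg i, hle i]

variable {d : ℕ} {H : Matrix (Fin d) (Fin d) ℝ} (hH : H.PosSemidef)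

lemma sqrt_transpose : hH.sqrtᵀ = hH.sqrt := by
  simp only [PosSemidef.sqrt, ← conjTranspose_eq_transpose_of_trivial, conjTranspose_mul,
    diagonal_conjTranspose, star_eq_conjTranspose, conjTranspose_conjTranspose, star_trivial,
    Matrix.mul_assoc]

lemma sqrt_mul_self : hH.sqrt * hH.sqrt = H := by
  conv_rhs => rw [hH.1.spectral_theorem, Unitary.conjStarAlgAut_apply]
  simp only [PosSemidef.sqrt, Matrix.mul_assoc, ← Matrix.mul_assoc _ (hH.1.eigenvectorUnitary.1),
    Unitary.coe_star_mul_self, Matrix.one_mul]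
  rw [← Matrix.mul_assoc (diagonal _), diagonal_mul_diagonal]
  congr 3 with i
  simp [Real.mul_self_sqrt (hH.eigenvalues_nonneg i)]

end Matrix.PosSemidef

theorem gaussian_fourth_moment_matrix (d : ℕ) (H : Matrix (Fin d) (Fin d) ℝ)
    (hH : H.PosSemidef) :
    (Matrix.of fun i j =>
        ∫ z : Fin d → ℝ,
          (∑ k, (hH.sqrt.mulVec z) k ^ 2) * ((hH.sqrt.mulVec z) i * (hH.sqrt.mulVec z) j)
          ∂(Measure.pi fun _ : Fin d => gaussianReal 0 1))
      = (2 : ℝ) • (H * H) + H.trace • H ∧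
    ((3 * H.trace) • H -
        Matrix.of fun i j =>
          ∫ z : Fin d → ℝ,
            (∑ k, (hH.sqrt.mulVec z) k ^ 2) * ((hH.sqrt.mulVec z) i * (hH.sqrt.mulVec z) j)
            ∂(Measure.pi fun _ : Fin d => gaussianReal 0 1)).PosSemidef := by
  have hmoment := integral_sum_sq_mulVec_mul_mulVec_pi_gaussianReal hH.sqrt
  rw [hH.sqrt_transpose, hH.sqrt_mul_self] at hmoment
  refine ⟨hmoment, ?_⟩
  rw [hmoment, show (3 * H.trace) • H - ((2 : ℝ) • (H * H) + H.trace • H)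
    = (2 : ℝ) • (H.trace • H - H * H) by module]
  exact hH.trace_smul_sub_mul_self.smul zero_le_two
end

section
/- Let τ ∈ ℕ, let β_0, …, β_τ be real numbers, and let Q_1, …, Q_τ be real symmetric d×d matrices with 0 ≼ Q_j ≼ I for every j. Define V = Σ_{k=0}^{τ} β_{τ−k} · (Q_τ Q_{τ−1} ⋯ Q_{τ−k+1}), where the empty matrix product (k = 0) is the identity I. Then tr(V Vᵀ) ≤ d · (Σ_{k=0}^{τ} |β_k|)². -/
/-!
`tr (V Vᵀ)` is the squared Frobenius norm of `V`, so by the triangle inequality it suffices that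
every product `P` of the `Q j` has `tr (P Pᵀ) ≤ d`. From `0 ≼ Q ≼ I` we get `Q Qᵀ = Q² ≼ I`, and
since conjugation `X ↦ G X Gᵀ` preserves `≼`, induction on the number of factors gives
`P Pᵀ ≼ I`, hence `tr (P Pᵀ) ≤ tr I = d`.
-/

open Matrix
open scoped MatrixOrder

theorem List.prod_mul_star_prod_le_one {R : Type*} [Semiring R] [PartialOrder R] [StarRing R]
    [StarOrderedRing R] {l : List R} (hl : ∀ x ∈ l, x * star x ≤ 1) :
    l.prod * star l.prod ≤ 1 := by
  induction l with
  | nil => simp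
  | cons x l ih =>
    rw [List.forall_mem_cons] at hl
    calc (x :: l).prod * star (x :: l).prod = x * (l.prod * star l.prod) * star x := by
          simp only [List.prod_cons, star_mul, mul_assoc]
      _ ≤ x * 1 * star x := star_right_conjugate_le_conjugate (ih hl.2) x
      _ ≤ 1 := by rw [mul_one]; exact hl.1

namespace Matrix

variable {𝕜 m n : Type*} [RCLike 𝕜] [Fintype m] [Fintype n]

theorem mul_self_le_one_of_nonneg_of_le_one [DecidableEq n] {A : Matrix n n 𝕜} (h₀ : 0 ≤ A)
    (h₁ : A ≤ 1) : A * A ≤ 1 := by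
  obtain ⟨S, hS, rfl⟩ : ∃ S, 0 ≤ S ∧ S * S = A :=
    ⟨CFC.sqrt A, CFC.sqrt_nonneg A, CFC.sqrt_mul_sqrt_self A h₀⟩
  calc S * S * (S * S) = S * (S * S) * S := by simp only [mul_assoc]
    _ ≤ S * 1 * S := conjugate_le_conjugate_of_nonneg h₁ hS
    _ ≤ 1 := by rwa [mul_one]

theorem trace_le_card_of_le_one [DecidableEq n] {A : Matrix n n ℝ} (h : A ≤ 1) :
    A.trace ≤ Fintype.card n := by
  have := (le_iff.mp h).trace_nonneg
  rwa [trace_sub, trace_one, sub_nonneg] at this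

section Frobenius

attribute [local instance] frobeniusNormedAddCommGroup frobeniusNormedSpace

theorem frobenius_norm_sq_eq_trace (A : Matrix m n ℝ) : ‖A‖ ^ 2 = (A * Aᵀ).trace := by
  rw [frobenius_norm_def, ← Real.sqrt_eq_rpow, Real.sq_sqrt (by positivity)]
  simp [trace, mul_apply, sq]

theorem trace_sum_smul_mul_transpose_le {ι : Type*} (s : Finset ι) (c : ι → ℝ)
    (A : ι → Matrix m n ℝ) {M : ℝ} (hA : ∀ i ∈ s, (A i * (A i)ᵀ).trace ≤ M) :
    ((∑ i ∈ s, c i • A i) * (∑ i ∈ s, c i • A i)ᵀ).trace ≤ M * (∑ i ∈ s, |c i|) ^ 2 := by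
  have hnorm : ∀ i ∈ s, ‖A i‖ ≤ √M := fun i hi =>
    Real.le_sqrt_of_sq_le ((frobenius_norm_sq_eq_trace (A i)).trans_le (hA i hi))
  have hsum : ‖∑ i ∈ s, c i • A i‖ ≤ (∑ i ∈ s, |c i|) * √M :=
    calc ‖∑ i ∈ s, c i • A i‖ ≤ ∑ i ∈ s, |c i| * ‖A i‖ := by
          simpa only [norm_smul, Real.norm_eq_abs] using norm_sum_le s (fun i => c i • A i)
      _ ≤ ∑ i ∈ s, |c i| * √M := by gcongr with i hi; exact hnorm i hi
      _ = (∑ i ∈ s, |c i|) * √M := (Finset.sum_mul ..).symm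
  obtain rfl | ⟨i, hi⟩ := s.eq_empty_or_nonempty
  · simp
  have hM : 0 ≤ M := (sq_nonneg ‖A i‖).trans ((frobenius_norm_sq_eq_trace _).trans_le (hA i hi))
  calc ((∑ i ∈ s, c i • A i) * (∑ i ∈ s, c i • A i)ᵀ).trace = ‖∑ i ∈ s, c i • A i‖ ^ 2 :=
        (frobenius_norm_sq_eq_trace _).symm
    _ ≤ ((∑ i ∈ s, |c i|) * √M) ^ 2 := by gcongr
    _ = M * (∑ i ∈ s, |c i|) ^ 2 := by rw [mul_pow, Real.sq_sqrt hM, mul_comm]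

end Frobenius

end Matrix

theorem trace_V_Vt_le (d τ : ℕ) (β : ℕ → ℝ) (Q : ℕ → Matrix (Fin d) (Fin d) ℝ)
    (hQ : ∀ j, 1 ≤ j → j ≤ τ →
      (Q j).PosSemidef ∧ ((1 : Matrix (Fin d) (Fin d) ℝ) - Q j).PosSemidef) :
    Matrix.trace
        ((∑ k ∈ Finset.range (τ + 1),
            β (τ - k) • (((List.range k).map fun j => Q (τ - j))).prod) *
          (∑ k ∈ Finset.range (τ + 1),
            β (τ - k) • (((List.range k).map fun j => Q (τ - j))).prod)ᵀ)
      ≤ (d : ℝ) * (∑ k ∈ Finset.range (τ + 1), |β k|) ^ 2 := by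
  have hfactor : ∀ k ≤ τ, ∀ G ∈ (List.range k).map fun j => Q (τ - j), G * star G ≤ 1 := by
    intro k hk G hG
    obtain ⟨j, hj, rfl⟩ := List.mem_map.mp hG
    rw [List.mem_range] at hj
    obtain ⟨h₀, h₁⟩ := hQ (τ - j) (by omega) (by omega)
    rw [h₀.isHermitian.star_eq]
    exact mul_self_le_one_of_nonneg_of_le_one (nonneg_iff_posSemidef.mpr h₀) (le_iff.mpr h₁)
  calc _ ≤ (d : ℝ) * (∑ k ∈ Finset.range (τ + 1), |β (τ - k)|) ^ 2 := by
        refine trace_sum_smul_mul_transpose_le _ _ _ fun k hk => ?_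
        have hprod := List.prod_mul_star_prod_le_one (hfactor k (Finset.mem_range_succ_iff.mp hk))
        simpa [star_eq_conjTranspose] using trace_le_card_of_le_one hprod
    _ = (d : ℝ) * (∑ k ∈ Finset.range (τ + 1), |β k|) ^ 2 := by
        rw [← Finset.sum_range_reflect (fun k => |β k|)]
        simp
end

section
/- For all real numbers c, x with 0 < c < 1/4 and 0 < x ≤ c/(9·log²(9/c)), one has x·log²(1/x) ≤ c. -/
open Real Set

/-! `t ↦ t² e^{-t}` is decreasing on `[2, ∞)`. Put `L = log (9 / c) ≥ 2` and `v = L + 2 log L`, so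
that `e^{-v} = c / (9 L²)`. The hypothesis says `x ≤ e^{-v}`, i.e. `log (1 / x) ≥ v`, hence
`x log² (1 / x) ≤ v² e^{-v} = v² c / (9 L²) ≤ c`, because `v ≤ 3 L`. -/

/-- For `n ≤ v ≤ u` one has `u / v ≤ 1 + (u - v) / n ≤ e^{(u - v) / n}`; raise this to the `n`-th
power. -/
theorem pow_mul_exp_neg_antitoneOn (n : ℕ) :
    AntitoneOn (fun t : ℝ ↦ t ^ n * exp (-t)) (Ici (n : ℝ)) := by
  rcases Nat.eq_zero_or_pos n with rfl | hn
  · intro v _ u _ hvu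
    simpa using exp_le_exp.mpr (neg_le_neg hvu)
  intro v (hv : (n : ℝ) ≤ v) u _ hvu
  have hn' : (0 : ℝ) < n := Nat.cast_pos.mpr hn
  have hv0 : 0 < v := hn'.trans_le hv
  have hratio : u ≤ v * exp ((u - v) / n) := by
    have hfrac : (u - v) / v ≤ (u - v) / n := div_le_div_of_nonneg_left (by linarith) hn' hv
    calc u = v * (1 + (u - v) / v) := by field_simp; ring
      _ ≤ v * exp ((u - v) / n) := by
        gcongr
        linarith [add_one_le_exp ((u - v) / n)]
  have hpow : u ^ n ≤ v ^ n * exp (u - v) := by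
    calc u ^ n ≤ (v * exp ((u - v) / n)) ^ n := by gcongr; linarith
      _ = v ^ n * exp (u - v) := by
        rw [mul_pow, ← exp_nat_mul, mul_div_cancel₀ _ hn'.ne']
  calc u ^ n * exp (-u) ≤ v ^ n * exp (u - v) * exp (-u) := by gcongr
    _ = v ^ n * exp (-v) := by rw [mul_assoc, ← exp_add]; ring_nf

theorem mul_log_one_div_sq_le {x v : ℝ} (hx : 0 < x) (hv : 2 ≤ v) (hxv : x ≤ exp (-v)) :
    x * log (1 / x) ^ 2 ≤ v ^ 2 * exp (-v) := by
  have hlog : v ≤ log (1 / x) := by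
    rw [one_div, log_inv, le_neg]
    exact (log_le_iff_le_exp hx).mpr hxv
  have hexp : exp (-log (1 / x)) = x := by rw [one_div, log_inv, neg_neg, exp_log hx]
  calc x * log (1 / x) ^ 2 = log (1 / x) ^ 2 * exp (-log (1 / x)) := by rw [hexp, mul_comm]
    _ ≤ v ^ 2 * exp (-v) :=
      pow_mul_exp_neg_antitoneOn 2 (by simpa using hv) (by simpa using hv.trans hlog) hlog

theorem two_le_log_nine_div {c : ℝ} (hc0 : 0 < c) (hc1 : c < 1 / 4) : 2 ≤ log (9 / c) := by
  have hexp : exp 2 < 36 := by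
    have : exp 2 = exp 1 ^ 2 := by rw [← exp_nat_mul]; norm_num
    nlinarith [exp_one_lt_d9, exp_pos 1]
  have h36 : (36 : ℝ) ≤ 9 / c := by rw [le_div_iff₀ hc0]; linarith
  exact (le_log_iff_exp_le (by positivity)).mpr (by linarith)

theorem x_log_sq_le (c x : ℝ) (hc0 : 0 < c) (hc1 : c < 1 / 4) (hx0 : 0 < x)
    (hx : x ≤ c / (9 * Real.log (9 / c) ^ 2)) :
    x * Real.log (1 / x) ^ 2 ≤ c := by
  set L := log (9 / c)
  have hL : 2 ≤ L := two_le_log_nine_div hc0 hc1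
  have hL0 : 0 < L := by linarith
  have hlogL : 0 ≤ log L := log_nonneg (by linarith)
  have hexp : exp (-(L + 2 * log L)) = c / (9 * L ^ 2) := by
    rw [exp_neg, exp_add, exp_log (by positivity), ← log_rpow hL0, exp_log (by positivity)]
    field_simp
    norm_num
  calc x * log (1 / x) ^ 2 ≤ (L + 2 * log L) ^ 2 * exp (-(L + 2 * log L)) :=
        mul_log_one_div_sq_le hx0 (by linarith) (hexp ▸ hx)
    _ ≤ (3 * L) ^ 2 * (c / (9 * L ^ 2)) := by
        rw [hexp]; gcongr; linarith [log_le_self hL0.le]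
    _ = c := by field_simp; ring
end
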